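/- arXiv:1503.08802 — 7 statements merged into one kernel-verified Lean document; each statement's English description precedes it below -/
import Mathlib

section
/- Let a, b, c, d be real quaternions with a ≠ 0 and c ≠ 0. Then |a·d − a·c·a⁻¹·b|² = |a|²·|d|² + |b|²·|c|² − 2·Re(a·conj(c)·d·conj(b)) = |c·a·c⁻¹·d − c·b|². In particular, the square of the Dieudonné determinant det(A) = |ad − aca⁻¹b| of the matrix A = !![a,b;c,d] equals α_A := |a|²|d|² + |b|²|c|² − 2Re(a·conj(c)·d·conj(b)), which also equals |σ|² where σ = c·a·c⁻¹·d − c·b. -/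
/-!
Factor out the left factor: `ad - aca⁻¹b = -a(ca⁻¹b - d)` and `cac⁻¹d - cb = c(ac⁻¹d - b)`.
Expanding `‖x - y‖² = ‖x‖² + ‖y‖² - 2 Re(x ȳ)` and using `‖u‖² u⁻¹ = ū` yields `α` in both
cases, the first after the symmetry `Re(c ā b d̄) = Re(a c̄ d b̄)` (conjugation invariance and
cyclicity of `Re`).
-/

open Quaternion

namespace Quaternion

theorem re_mul_comm {R : Type*} [CommRing R] (x y : ℍ[R]) : (x * y).re = (y * x).re := by
  simp only [re_mul]
  ring

theorem re_mul_star_mul_mul_star_comm {R : Type*} [CommRing R] (x y z w : ℍ[R]) :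
    (x * star y * z * star w).re = (y * star x * w * star z).re := by
  calc (x * star y * z * star w).re
      = (star (x * star y * z * star w)).re := (re_star _).symm
    _ = (w * star z * (y * star x)).re := by simp only [star_mul, star_star, mul_assoc]
    _ = (y * star x * w * star z).re := by rw [re_mul_comm]; simp only [mul_assoc]

theorem norm_sub_sq_eq (x y : ℍ[ℝ]) :
    ‖x - y‖ ^ 2 = ‖x‖ ^ 2 + ‖y‖ ^ 2 - 2 * (x * star y).re := by
  rw [norm_sub_sq_real, inner_def]
  ring

theorem norm_sq_smul_inv (x : ℍ[ℝ]) : (‖x‖ ^ 2) • x⁻¹ = star x := by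
  rcases eq_or_ne x 0 with rfl | hx
  · simp
  · rw [inv_def, smul_smul, sq, ← normSq_eq_norm_mul_self, mul_inv_cancel₀ (by simpa using hx),
      one_smul]

theorem norm_mul_sub_sq {u : ℍ[ℝ]} (hu : u ≠ 0) (x y z : ℍ[ℝ]) :
    ‖u * (x * u⁻¹ * y - z)‖ ^ 2
      = ‖x‖ ^ 2 * ‖y‖ ^ 2 + ‖u‖ ^ 2 * ‖z‖ ^ 2 - 2 * (x * star u * y * star z).re := by
  have cross : ‖u‖ ^ 2 * (x * u⁻¹ * y * star z).re = (x * star u * y * star z).re := by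
    rw [← norm_sq_smul_inv u, mul_smul_comm, smul_mul_assoc, smul_mul_assoc, re_smul,
      smul_eq_mul]
  rw [norm_mul, mul_pow, norm_sub_sq_eq, norm_mul, norm_mul, norm_inv, ← cross]
  field_simp

end Quaternion

/-- For real quaternions `a, b, c, d` with `a ≠ 0`, `c ≠ 0`,
`|ad − aca⁻¹b|² = |a|²|d|² + |b|²|c|² − 2 Re(a c̄ d b̄) = |cac⁻¹d − cb|²`. -/
theorem quaternion_det_alpha (a b c d : ℍ[ℝ]) (ha : a ≠ 0) (hc : c ≠ 0) :
    ‖a * d - a * c * a⁻¹ * b‖ ^ 2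
        = ‖a‖ ^ 2 * ‖d‖ ^ 2 + ‖b‖ ^ 2 * ‖c‖ ^ 2 - 2 * (a * star c * d * star b).re ∧
      ‖a‖ ^ 2 * ‖d‖ ^ 2 + ‖b‖ ^ 2 * ‖c‖ ^ 2 - 2 * (a * star c * d * star b).re
        = ‖c * a * c⁻¹ * d - c * b‖ ^ 2 := by
  constructor
  · rw [show a * d - a * c * a⁻¹ * b = -(a * (c * a⁻¹ * b - d)) by noncomm_ring, norm_neg,
      norm_mul_sub_sq ha, re_mul_star_mul_mul_star_comm c a b d]
    ring
  · rw [show c * a * c⁻¹ * d - c * b = c * (a * c⁻¹ * d - b) by noncomm_ring,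
      norm_mul_sub_sq hc]
    ring
end

section
/- Let M = !![a,b;c,d] be a 2×2 matrix over the real quaternions with a, b, c, d all nonzero and α_M := |a|²|d|² + |b|²|c|² − 2·Re(a·conj(c)·d·conj(b)) ≠ 0. Set l₁₁ = da − dbd⁻¹c, l₁₂ = bdb⁻¹a − bc, l₂₁ = cac⁻¹d − cb, l₂₂ = ad − aca⁻¹b and r₁₁ = ad − bd⁻¹cd, r₁₂ = db⁻¹ab − cb, r₂₁ = ac⁻¹dc − bc, r₂₂ = da − ca⁻¹ba (all of these are nonzero). Then M is invertible, with M⁻¹ = !![l₁₁⁻¹·d, −l₁₂⁻¹·b; −l₂₁⁻¹·c, l₂₂⁻¹·a] = !![d·r₁₁⁻¹, −b·r₁₂⁻¹; −c·r₂₁⁻¹, a·r₂₂⁻¹]; that is, M·N = 1 = N·M where N is either of these two (equal) matrices. -/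
open Matrix Quaternion
open scoped Quaternion

/-!
Write `|M|ᵢⱼ` for the Gelfand–Retakh quasideterminants of `M = !![a, b; c, d]`, e.g.
`|M|₁₁ = a - b d⁻¹ c`. Up to sign, each `lᵢⱼ` is a nonzero entry of `M` times `|M|ⱼᵢ` and each `rᵢⱼ`
is `|M|ⱼᵢ` times one, so both candidate matrices equal `(|M|ⱼᵢ⁻¹)ᵢⱼ`. Over any division ring, two
quasideterminants in the same row or column differ by nonzero factors, so all of them are nonzero
once `|M|₁₁` is, and then `(|M|ⱼᵢ⁻¹)ᵢⱼ` is a two-sided inverse of `M`. Over `ℍ`,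
`|d · |M|₁₁|² = α_M`, which is how the hypothesis `α_M ≠ 0` enters.
-/

theorem Quaternion.normSq_mul_sub_mul_inv_mul {R : Type*} [Field R] [LinearOrder R]
    [IsStrictOrderedRing R] (a b c : ℍ[R]) {d : ℍ[R]} (hd : d ≠ 0) :
    normSq (d * (a - b * d⁻¹ * c)) =
      normSq a * normSq d + normSq b * normSq c - 2 * (a * star c * d * star b).re := by
  have hN : normSq d ≠ 0 := normSq_ne_zero.2 hd
  have hstar : star d⁻¹ = (normSq d)⁻¹ • d := by
    rw [star_inv₀, inv_def, normSq_star, star_star]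
  have hre : (a * star (b * d⁻¹ * c)).re = (normSq d)⁻¹ * (a * star c * d * star b).re := by
    simp only [star_mul, hstar, mul_smul_comm, smul_mul_assoc, re_smul, smul_eq_mul, mul_assoc]
  rw [map_mul, sub_eq_add_neg, normSq_add, normSq_neg, star_neg, mul_neg, re_neg, hre,
    map_mul, map_mul, normSq_inv]
  field_simp
  ring

namespace Matrix

variable {K : Type*} [DivisionRing K]

/-- The quasideterminant `|M|ᵢⱼ`; `Fin.rev` swaps the two indices. -/
def quasidet (M : Matrix (Fin 2) (Fin 2) K) (i j : Fin 2) : K :=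
  M i j - M i j.rev * (M i.rev j.rev)⁻¹ * M i.rev j

def quasidetInv (M : Matrix (Fin 2) (Fin 2) K) : Matrix (Fin 2) (Fin 2) K :=
  of fun i j => (M.quasidet j i)⁻¹

variable {M : Matrix (Fin 2) (Fin 2) K}

theorem quasidet_rev_right (hM : ∀ i j, M i j ≠ 0) (i j : Fin 2) :
    M.quasidet i j.rev = -(M.quasidet i j * (M i.rev j)⁻¹ * M i.rev j.rev) := by
  simp only [quasidet, Fin.rev_rev, sub_mul, mul_assoc, mul_inv_cancel_left₀ (hM i.rev j),
    inv_mul_cancel₀ (hM i.rev j.rev), mul_one, neg_sub]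

theorem quasidet_rev_left (hM : ∀ i j, M i j ≠ 0) (i j : Fin 2) :
    M.quasidet i.rev j = -(M i.rev j.rev * (M i j.rev)⁻¹ * M.quasidet i j) := by
  simp only [quasidet, Fin.rev_rev, mul_sub, ← mul_assoc, inv_mul_cancel_right₀ (hM i j.rev),
    mul_inv_cancel₀ (hM i.rev j.rev), one_mul, neg_sub]

theorem quasidet_ne_zero (hM : ∀ i j, M i j ≠ 0) (h : M.quasidet 0 0 ≠ 0) (i j : Fin 2) :
    M.quasidet i j ≠ 0 := by
  have h₀₁ : M.quasidet 0 (Fin.rev 0) ≠ 0 := by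
    rw [quasidet_rev_right hM]
    exact neg_ne_zero.2 (mul_ne_zero (mul_ne_zero h (inv_ne_zero (hM _ _))) (hM _ _))
  have hrow (k : Fin 2) (hk : M.quasidet 0 k ≠ 0) : M.quasidet (Fin.rev 0) k ≠ 0 := by
    rw [quasidet_rev_left hM]
    exact neg_ne_zero.2 (mul_ne_zero (mul_ne_zero (hM _ _) (inv_ne_zero (hM _ _))) hk)
  fin_cases i <;> fin_cases j
  exacts [h, h₀₁, hrow 0 h, hrow 1 h₀₁]

theorem mul_quasidetInv (hM : ∀ i j, M i j ≠ 0) (hq : ∀ i j, M.quasidet i j ≠ 0) :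
    M * M.quasidetInv = 1 := by
  ext i k
  have hsum : (M * M.quasidetInv) i k =
      (M i 0 - M i 1 * (M k.rev 1)⁻¹ * M k.rev 0) * (M.quasidet k 0)⁻¹ := by
    have hcol : M.quasidet k 1 = _ := quasidet_rev_right hM k 0
    simp only [mul_apply, Fin.sum_univ_two, quasidetInv, of_apply, hcol, inv_neg,
      _root_.mul_inv_rev, inv_inv]
    noncomm_ring
  obtain rfl | rfl : i = k ∨ i = k.rev := by fin_cases i <;> fin_cases k <;> decide
  · rw [hsum, one_apply_eq]
    exact mul_inv_cancel₀ (hq i 0)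
  · rw [hsum, one_apply_ne (by fin_cases k <;> decide)]
    simp only [mul_inv_cancel₀ (hM k.rev 1), one_mul, sub_self, zero_mul]

theorem quasidetInv_mul (hM : ∀ i j, M i j ≠ 0) (hq : ∀ i j, M.quasidet i j ≠ 0) :
    M.quasidetInv * M = 1 := by
  ext i k
  have hsum : (M.quasidetInv * M) i k =
      (M.quasidet 0 i)⁻¹ * (M 0 k - M 0 i.rev * (M 1 i.rev)⁻¹ * M 1 k) := by
    have hrow : M.quasidet 1 i = _ := quasidet_rev_left hM 0 i
    simp only [mul_apply, Fin.sum_univ_two, quasidetInv, of_apply, hrow, inv_neg,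
      _root_.mul_inv_rev, inv_inv]
    noncomm_ring
  obtain rfl | rfl : k = i ∨ k = i.rev := by fin_cases i <;> fin_cases k <;> decide
  · rw [hsum, one_apply_eq]
    exact inv_mul_cancel₀ (hq 0 k)
  · rw [hsum, one_apply_ne (by fin_cases i <;> decide)]
    simp only [inv_mul_cancel_right₀ (hM 1 i.rev), sub_self, mul_zero]

theorem quasidetInv_fin_two (a b c d : K) :
    !![a, b; c, d].quasidetInv =
      !![(a - b * d⁻¹ * c)⁻¹, (c - d * b⁻¹ * a)⁻¹; (b - a * c⁻¹ * d)⁻¹, (d - c * a⁻¹ * b)⁻¹] := by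
  ext i j
  fin_cases i <;> fin_cases j <;> rfl

variable {a b c d : K}

theorem quasidetInv_fin_two_eq_inv_mul (ha : a ≠ 0) (hb : b ≠ 0) (hc : c ≠ 0) (hd : d ≠ 0)
    (hq : ∀ i j, !![a, b; c, d].quasidet i j ≠ 0) :
    (d * a - d * b * d⁻¹ * c ≠ 0 ∧ b * d * b⁻¹ * a - b * c ≠ 0 ∧
      c * a * c⁻¹ * d - c * b ≠ 0 ∧ a * d - a * c * a⁻¹ * b ≠ 0) ∧
    !![a, b; c, d].quasidetInv =
      !![(d * a - d * b * d⁻¹ * c)⁻¹ * d, -((b * d * b⁻¹ * a - b * c)⁻¹ * b);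
        -((c * a * c⁻¹ * d - c * b)⁻¹ * c), (a * d - a * c * a⁻¹ * b)⁻¹ * a] := by
  have f₁ : d * a - d * b * d⁻¹ * c = d * (a - b * d⁻¹ * c) := by noncomm_ring
  have f₂ : b * d * b⁻¹ * a - b * c = -b * (c - d * b⁻¹ * a) := by noncomm_ring
  have f₃ : c * a * c⁻¹ * d - c * b = -c * (b - a * c⁻¹ * d) := by noncomm_ring
  have f₄ : a * d - a * c * a⁻¹ * b = a * (d - c * a⁻¹ * b) := by noncomm_ring
  rw [f₁, f₂, f₃, f₄, quasidetInv_fin_two]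
  refine ⟨⟨mul_ne_zero hd (hq 0 0), mul_ne_zero (neg_ne_zero.2 hb) (hq 1 0),
    mul_ne_zero (neg_ne_zero.2 hc) (hq 0 1), mul_ne_zero ha (hq 1 1)⟩, ?_⟩
  simp only [_root_.mul_inv_rev, inv_mul_cancel_right₀ ha, inv_mul_cancel_right₀ hd, inv_neg,
    neg_mul, neg_neg, inv_mul_cancel_right₀ hb, inv_mul_cancel_right₀ hc]

theorem quasidetInv_fin_two_eq_mul_inv (ha : a ≠ 0) (hb : b ≠ 0) (hc : c ≠ 0) (hd : d ≠ 0)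
    (hq : ∀ i j, !![a, b; c, d].quasidet i j ≠ 0) :
    (a * d - b * d⁻¹ * c * d ≠ 0 ∧ d * b⁻¹ * a * b - c * b ≠ 0 ∧
      a * c⁻¹ * d * c - b * c ≠ 0 ∧ d * a - c * a⁻¹ * b * a ≠ 0) ∧
    !![a, b; c, d].quasidetInv =
      !![d * (a * d - b * d⁻¹ * c * d)⁻¹, -(b * (d * b⁻¹ * a * b - c * b)⁻¹);
        -(c * (a * c⁻¹ * d * c - b * c)⁻¹), a * (d * a - c * a⁻¹ * b * a)⁻¹] := by
  have f₁ : a * d - b * d⁻¹ * c * d = (a - b * d⁻¹ * c) * d := by noncomm_ring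
  have f₂ : d * b⁻¹ * a * b - c * b = (c - d * b⁻¹ * a) * -b := by noncomm_ring
  have f₃ : a * c⁻¹ * d * c - b * c = (b - a * c⁻¹ * d) * -c := by noncomm_ring
  have f₄ : d * a - c * a⁻¹ * b * a = (d - c * a⁻¹ * b) * a := by noncomm_ring
  rw [f₁, f₂, f₃, f₄, quasidetInv_fin_two]
  refine ⟨⟨mul_ne_zero (hq 0 0) hd, mul_ne_zero (hq 1 0) (neg_ne_zero.2 hb),
    mul_ne_zero (hq 0 1) (neg_ne_zero.2 hc), mul_ne_zero (hq 1 1) ha⟩, ?_⟩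
  simp only [_root_.mul_inv_rev, mul_inv_cancel_left₀ ha, mul_inv_cancel_left₀ hd, inv_neg,
    mul_neg, neg_neg, mul_inv_cancel_left₀ hb, mul_inv_cancel_left₀ hc]

end Matrix

/-- explicit two-sided inverse of a `2×2` quaternionic matrix. -/
theorem quaternion_matrix_inverse (a b c d : ℍ[ℝ])
    (ha : a ≠ 0) (hb : b ≠ 0) (hc : c ≠ 0) (hd : d ≠ 0)
    (hα : ‖a‖ ^ 2 * ‖d‖ ^ 2 + ‖b‖ ^ 2 * ‖c‖ ^ 2 - 2 * (a * star c * d * star b).re ≠ 0)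
    (M : Matrix (Fin 2) (Fin 2) ℍ[ℝ]) (hM : M = !![a, b; c, d]) :
    (d * a - d * b * d⁻¹ * c ≠ 0 ∧ b * d * b⁻¹ * a - b * c ≠ 0 ∧
     c * a * c⁻¹ * d - c * b ≠ 0 ∧ a * d - a * c * a⁻¹ * b ≠ 0 ∧
     a * d - b * d⁻¹ * c * d ≠ 0 ∧ d * b⁻¹ * a * b - c * b ≠ 0 ∧
     a * c⁻¹ * d * c - b * c ≠ 0 ∧ d * a - c * a⁻¹ * b * a ≠ 0) ∧
    IsUnit M ∧
    !![(d * a - d * b * d⁻¹ * c)⁻¹ * d, -((b * d * b⁻¹ * a - b * c)⁻¹ * b);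
       -((c * a * c⁻¹ * d - c * b)⁻¹ * c), (a * d - a * c * a⁻¹ * b)⁻¹ * a]
      = !![d * (a * d - b * d⁻¹ * c * d)⁻¹, -(b * (d * b⁻¹ * a * b - c * b)⁻¹);
           -(c * (a * c⁻¹ * d * c - b * c)⁻¹), a * (d * a - c * a⁻¹ * b * a)⁻¹] ∧
    M * !![(d * a - d * b * d⁻¹ * c)⁻¹ * d, -((b * d * b⁻¹ * a - b * c)⁻¹ * b);
           -((c * a * c⁻¹ * d - c * b)⁻¹ * c), (a * d - a * c * a⁻¹ * b)⁻¹ * a] = 1 ∧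
    !![(d * a - d * b * d⁻¹ * c)⁻¹ * d, -((b * d * b⁻¹ * a - b * c)⁻¹ * b);
       -((c * a * c⁻¹ * d - c * b)⁻¹ * c), (a * d - a * c * a⁻¹ * b)⁻¹ * a] * M = 1 := by
  subst hM
  have hM₀ : ∀ i j, !![a, b; c, d] i j ≠ 0 := by
    intro i j
    fin_cases i <;> fin_cases j <;> assumption
  have hq₀₀ : !![a, b; c, d].quasidet 0 0 ≠ 0 := by
    refine right_ne_zero_of_mul (a := d) (normSq_ne_zero.1 ?_)
    rw [show !![a, b; c, d].quasidet 0 0 = a - b * d⁻¹ * c from rfl,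
      normSq_mul_sub_mul_inv_mul a b c hd]
    simpa only [normSq_eq_norm_mul_self, sq] using hα
  have hq := quasidet_ne_zero hM₀ hq₀₀
  obtain ⟨⟨hl₁, hl₂, hl₃, hl₄⟩, hL⟩ := quasidetInv_fin_two_eq_inv_mul ha hb hc hd hq
  obtain ⟨⟨hr₁, hr₂, hr₃, hr₄⟩, hR⟩ := quasidetInv_fin_two_eq_mul_inv ha hb hc hd hq
  have hMN := mul_quasidetInv hM₀ hq
  have hNM := quasidetInv_mul hM₀ hq
  rw [← hL, ← hR]
  exact ⟨⟨hl₁, hl₂, hl₃, hl₄, hr₁, hr₂, hr₃, hr₄⟩, ⟨⟨_, _, hMN, hNM⟩, rfl⟩, rfl, hMN, hNM⟩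
end

section
/- Let M = !![a,b;c,d] be a 2×2 matrix over the real quaternions with a, b, c, d all nonzero and α_M := |a|²|d|² + |b|²|c|² − 2·Re(a·conj(c)·d·conj(b)) ≠ 0. With l₁₁ = da − dbd⁻¹c, l₁₂ = bdb⁻¹a − bc, l₂₁ = cac⁻¹d − cb, l₂₂ = ad − aca⁻¹b, r₁₁ = ad − bd⁻¹cd, r₁₂ = db⁻¹ab − cb, r₂₁ = ac⁻¹dc − bc, r₂₂ = da − ca⁻¹ba, and writing d̃ = l₁₁⁻¹d, c̃ = l₂₁⁻¹c, b̃ = l₁₂⁻¹b, ã = l₂₂⁻¹a, d₊ = d·r₁₁⁻¹, c₊ = c·r₂₁⁻¹, b₊ = b·r₁₂⁻¹, a₊ = a·r₂₂⁻¹, the following identities hold: (1) a·d₊ − b·c₊ = 1 = d·a₊ − c·b₊ and d̃·a − b̃·c = 1 = ã·d − c̃·b; (2) a·d̃ − b·c̃ = 1 = d·ã − c·b̃ and d₊·a − b₊·c = 1 = a₊·d − c₊·b; (3) a·b̃ = b·ã, c·d̃ = d·c̃, ã·c = c̃·a, b̃·d = d̃·b; (4) a·b₊ = b·a₊, c·d₊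 = d·c₊, a₊·c = c₊·a, b₊·d = d₊·b. -/
/-!
Put `S = a - b d⁻¹ c` and `S' = d - c a⁻¹ b`, the Schur complements of `d` and of `a` in
`M = !![a, b; c, d]`. Each of the eight quantities collapses, up to sign, to an entry of
`!![S⁻¹, -S⁻¹ b d⁻¹; -S'⁻¹ c a⁻¹, S'⁻¹]`, and the push-through relation `S a⁻¹ b = b d⁻¹ S'` shows
`S⁻¹ b d⁻¹ = a⁻¹ b S'⁻¹`; with it this matrix is a two-sided inverse of `M`, which is exactly the
sixteen identities. Both complements are nonzero because `|S|² |d|² = α_M = |S'|² |a|²`.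
The whole statement is invariant under `(a, b, c, d) ↦ (d, c, b, a)`, which swaps `S` and `S'`.
-/

section DivisionRing

variable {D : Type*} [DivisionRing D] {a b c d : D}

def schurCompl (a b c d : D) : D := a - b * d⁻¹ * c

theorem schurCompl_mul_inv_mul (ha : a ≠ 0) (hd : d ≠ 0) :
    schurCompl a b c d * a⁻¹ * b = b * d⁻¹ * schurCompl d c b a := by
  simp [schurCompl, sub_mul, mul_sub, mul_assoc, ha, hd]

theorem schurCompl_inv_mul_mul_inv (ha : a ≠ 0) (hd : d ≠ 0)
    (hs : schurCompl a b c d ≠ 0) (hs' : schurCompl d c b a ≠ 0) :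
    (schurCompl a b c d)⁻¹ * b * d⁻¹ = a⁻¹ * b * (schurCompl d c b a)⁻¹ :=
  calc (schurCompl a b c d)⁻¹ * b * d⁻¹
      = (schurCompl a b c d)⁻¹ * (b * d⁻¹ * schurCompl d c b a * (schurCompl d c b a)⁻¹) := by
        rw [mul_inv_cancel_right₀ hs', mul_assoc]
    _ = (schurCompl a b c d)⁻¹ * (schurCompl a b c d * a⁻¹ * b * (schurCompl d c b a)⁻¹) := by
        rw [schurCompl_mul_inv_mul ha hd]
    _ = a⁻¹ * b * (schurCompl d c b a)⁻¹ := by simp only [mul_assoc, inv_mul_cancel_left₀ hs]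

/-- The `(1,1)` and `(1,2)` entries of `M N = 1` and of `N M = 1` for the inverse `N` described
above; the case `(d, c, b, a)` gives the other entries. -/
theorem schurCompl_inverse_entries (ha : a ≠ 0) (hd : d ≠ 0)
    (hs : schurCompl a b c d ≠ 0) (hs' : schurCompl d c b a ≠ 0) :
    a * (schurCompl a b c d)⁻¹ - b * ((schurCompl d c b a)⁻¹ * c * a⁻¹) = 1 ∧
    (schurCompl a b c d)⁻¹ * a - (schurCompl a b c d)⁻¹ * b * d⁻¹ * c = 1 ∧
    a * ((schurCompl a b c d)⁻¹ * b * d⁻¹) = b * (schurCompl d c b a)⁻¹ ∧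
    (schurCompl a b c d)⁻¹ * b * d⁻¹ * d = (schurCompl a b c d)⁻¹ * b := by
  refine ⟨?_, ?_, ?_, inv_mul_cancel_right₀ hd _⟩
  · rw [schurCompl_inv_mul_mul_inv hd ha hs' hs, ← mul_inv_cancel₀ hs]
    simp only [schurCompl, sub_mul, mul_assoc]
  · rw [← inv_mul_cancel₀ hs]
    simp only [schurCompl, mul_sub, mul_assoc]
  · rw [schurCompl_inv_mul_mul_inv ha hd hs hs', mul_assoc, mul_inv_cancel_left₀ ha]

theorem inv_mul_left_mul_schurCompl (hd : d ≠ 0) :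
    (d * a - d * b * d⁻¹ * c)⁻¹ * d = (schurCompl a b c d)⁻¹ := by
  rw [show d * a - d * b * d⁻¹ * c = d * schurCompl a b c d by
      simp only [schurCompl, mul_sub, mul_assoc],
    mul_inv_rev, inv_mul_cancel_right₀ hd]

theorem mul_inv_schurCompl_mul_right (hd : d ≠ 0) :
    d * (a * d - b * d⁻¹ * c * d)⁻¹ = (schurCompl a b c d)⁻¹ := by
  rw [show a * d - b * d⁻¹ * c * d = schurCompl a b c d * d by simp only [schurCompl, sub_mul],
    mul_inv_rev, mul_inv_cancel_left₀ hd]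

theorem inv_conj_mul_schurCompl_mul (hb : b ≠ 0) (hd : d ≠ 0) :
    (b * d * b⁻¹ * a - b * c)⁻¹ * b = (schurCompl a b c d)⁻¹ * b * d⁻¹ := by
  rw [show b * d * b⁻¹ * a - b * c = b * d * b⁻¹ * schurCompl a b c d by
      simp [schurCompl, mul_sub, mul_assoc, hb, hd]]
  simp [mul_inv_rev, mul_assoc, hb]

theorem mul_inv_schurCompl_mul_conj (hb : b ≠ 0) (hd : d ≠ 0) :
    b * (d * b⁻¹ * a * b - c * b)⁻¹ = (schurCompl a b c d)⁻¹ * b * d⁻¹ := by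
  rw [show d * b⁻¹ * a * b - c * b = d * b⁻¹ * schurCompl a b c d * b by
      simp [schurCompl, mul_sub, sub_mul, mul_assoc, hb, hd]]
  simp [mul_inv_rev, mul_assoc, hb]

end DivisionRing

open Quaternion

theorem Quaternion.re_mul_comm_s3 {R : Type*} [CommRing R] (x y : ℍ[R]) :
    (x * y).re = (y * x).re := by
  simp only [re_mul]
  ring

section StudyDeterminant

variable {R : Type*} [Field R] [LinearOrder R] [IsStrictOrderedRing R] {a b c d : ℍ[R]}

def studyDet (a b c d : ℍ[R]) : R :=
  normSq a * normSq d + normSq b * normSq c - 2 * (a * star c * d * star b).re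

theorem studyDet_swap : studyDet d c b a = studyDet a b c d := by
  rw [studyDet, studyDet, mul_assoc, re_mul_comm_s3, ← mul_assoc]
  ring

theorem normSq_schurCompl_mul (hd : d ≠ 0) :
    normSq (schurCompl a b c d) * normSq d = studyDet a b c d := by
  have hn : normSq d ≠ 0 := normSq_ne_zero.mpr hd
  have hS : schurCompl a b c d = a + -((normSq d)⁻¹ • (b * star d * c)) := by
    rw [schurCompl, inv_def, mul_smul_comm, smul_mul_assoc, sub_eq_add_neg]
  rw [hS, normSq_add, normSq_neg, normSq_smul, star_neg, Quaternion.star_smul, mul_neg,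
    mul_smul_comm, re_neg, re_smul, star_mul, star_mul, star_star, map_mul, map_mul, normSq_star,
    studyDet]
  simp only [smul_eq_mul, mul_assoc]
  field_simp
  ring

theorem schurCompl_ne_zero (hd : d ≠ 0) (hα : studyDet a b c d ≠ 0) :
    schurCompl a b c d ≠ 0 := by
  rintro hS
  apply hα
  rw [← normSq_schurCompl_mul hd, hS, map_zero, zero_mul]

end StudyDeterminant

/-- Kellerhals' identities for the tilde/subtilde quantities attached to an
invertible `2×2` quaternionic matrix `!![a,b;c,d]`. -/
theorem quaternion_tilde_identities (a b c d : ℍ[ℝ])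
    (ha : a ≠ 0) (hb : b ≠ 0) (hc : c ≠ 0) (hd : d ≠ 0)
    (hα : ‖a‖ ^ 2 * ‖d‖ ^ 2 + ‖b‖ ^ 2 * ‖c‖ ^ 2 - 2 * (a * star c * d * star b).re ≠ 0)
    (dt ct bt at' dp cp bp ap' : ℍ[ℝ])
    (hdt : dt = (d * a - d * b * d⁻¹ * c)⁻¹ * d)
    (hct : ct = (c * a * c⁻¹ * d - c * b)⁻¹ * c)
    (hbt : bt = (b * d * b⁻¹ * a - b * c)⁻¹ * b)
    (hat : at' = (a * d - a * c * a⁻¹ * b)⁻¹ * a)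
    (hdp : dp = d * (a * d - b * d⁻¹ * c * d)⁻¹)
    (hcp : cp = c * (a * c⁻¹ * d * c - b * c)⁻¹)
    (hbp : bp = b * (d * b⁻¹ * a * b - c * b)⁻¹)
    (hap : ap' = a * (d * a - c * a⁻¹ * b * a)⁻¹) :
    (a * dp - b * cp = 1 ∧ d * ap' - c * bp = 1 ∧ dt * a - bt * c = 1 ∧ at' * d - ct * b = 1) ∧
    (a * dt - b * ct = 1 ∧ d * at' - c * bt = 1 ∧ dp * a - bp * c = 1 ∧ ap' * d - cp * b = 1) ∧
    (a * bt = b * at' ∧ c * dt = d * ct ∧ at' * c = ct * a ∧ bt * d = dt * b) ∧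
    (a * bp = b * ap' ∧ c * dp = d * cp ∧ ap' * c = cp * a ∧ bp * d = dp * b) := by
  have hdet : studyDet a b c d ≠ 0 := by
    simpa only [studyDet, normSq_eq_norm_mul_self, ← sq] using hα
  have hs := schurCompl_ne_zero hd hdet
  have hs' := schurCompl_ne_zero ha (studyDet_swap.trans_ne hdet)
  obtain ⟨h₁, h₂, h₃, h₄⟩ := schurCompl_inverse_entries ha hd hs hs'
  obtain ⟨h₁', h₂', h₃', h₄'⟩ := schurCompl_inverse_entries hd ha hs' hs
  rw [inv_mul_left_mul_schurCompl hd] at hdt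
  rw [inv_mul_left_mul_schurCompl ha] at hat
  rw [mul_inv_schurCompl_mul_right hd] at hdp
  rw [mul_inv_schurCompl_mul_right ha] at hap
  rw [inv_conj_mul_schurCompl_mul hb hd] at hbt
  rw [inv_conj_mul_schurCompl_mul hc ha] at hct
  rw [mul_inv_schurCompl_mul_conj hb hd] at hbp
  rw [mul_inv_schurCompl_mul_conj hc ha] at hcp
  subst dt ct bt at' dp cp bp ap'
  exact ⟨⟨h₁, h₁', h₂, h₂'⟩, ⟨h₁, h₁', h₂, h₂'⟩, ⟨h₃, h₃'.symm, h₄'.symm, h₄⟩,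
    ⟨h₃, h₃'.symm, h₄'.symm, h₄⟩⟩
end

section
/- Let S = !![a,b;c,d] and T = !![λ,0;0,μ] be 2×2 quaternionic matrices with α_S = 1, |λ|·|μ| = 1 and |μ| ≥ 1, where λ is not similar to μ. Suppose the subgroup of units of M₂(ℍ) generated by S and T is discrete, and the Shimizu–Leutbecher sequence S₀ = S, S_{n+1} = S_n·T·S_n⁻¹, S_n = !![a_n,b_n;c_n,d_n], satisfies b_n·c_n ≠ 0 for every n ≥ 0. Then β(T)·L^k ≥ 1, where β(T) := sup{ |(λ − e·μ·e⁻¹)·(λ − f·μ·f⁻¹)| : e, f ∈ ℍ, e ≠ 0, f ≠ 0 }, L := 1 + |μ|, and k := ⌊1 + |b·c|⌋ + 1 (⌊·⌋ the greatest integer function). -/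
/-!
Suppose `β(T) L^k < 1`. Since `1 + |bc| < k ≤ 2^k ≤ L^k` and `k ≥ 2`, this gives
`β(T) (1 + |bc|) < 1` and `β(T) L² < 1`, hence `|λ - eμe⁻¹| L ≤ 1` for every `e ≠ 0`.

The function `α` is multiplicative (factor a matrix with `a ≠ 0` as lower unitriangular times
diagonal times upper unitriangular), so `α(S_n) = 1` for all `n`. Consequently
`|a_n d_n| ≤ 1 + |b_n c_n|`, the entries of `S_n⁻¹` have the norms of `d_n, b_n, c_n, a_n`, and
the entries of `S_{n+1} = S_n T S_n⁻¹` satisfy `|b_{n+1}| = |λ - eμe⁻¹| |b_n| |a_n|` and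
`|c_{n+1}| = |λ - fμf⁻¹| |d_n| |c_n|` with `e = a_n⁻¹ b_n`, `f = c_n⁻¹ d_n`. So `x_n = |b_n c_n|`
obeys `x_{n+1} ≤ β(T) x_n (1 + x_n)` and decreases strictly to `0`. Once `x_n ≤ 1/L`, the
diagonal entries of `S_{n+1}` have norm at most `L`, and from then on `|b_n|`, `|c_n|` do not
increase. Thus the `S_n` are pairwise distinct while they and their inverses eventually stay in
a compact set; a convergent subsequence gives `S_{n_{j+1}} S_{n_j}⁻¹ → 1`, contradicting
discreteness.
-/

open Matrix Quaternion Filter Topology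
open scoped Quaternion

instance Matrix.firstCountableTopology {m n R : Type*} [Countable m] [Countable n]
    [TopologicalSpace R] [FirstCountableTopology R] : FirstCountableTopology (Matrix m n R) :=
  inferInstanceAs (FirstCountableTopology (m → n → R))

theorem Matrix.isCompact_setOf_forall_norm_apply_le {m n α : Type*} [Finite m] [Finite n]
    [SeminormedAddCommGroup α] [ProperSpace α] (C : ℝ) :
    IsCompact {A : Matrix m n α | ∀ i j, ‖A i j‖ ≤ C} := by
  have := isCompact_univ_pi fun _ : m ↦ isCompact_univ_pi fun _ : n ↦
    isCompact_closedBall (0 : α) C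
  simp only [Set.pi, mem_closedBall_zero_iff, Set.mem_univ, true_implies] at this
  exact this

/-- If the successive quotients `u (φ (j + 1)) * (u (φ j))⁻¹` of a convergent subsequence tend
to `1`, discreteness forces two terms of the subsequence to coincide. -/
theorem Subgroup.not_injective_of_frequently_mem_isCompact {M : Type*} [Monoid M]
    [TopologicalSpace M] [ContinuousMul M] [T2Space M] [FirstCountableTopology M]
    {H : Subgroup Mˣ} (hH : DiscreteTopology (Units.val '' (H : Set Mˣ))) {u : ℕ → Mˣ}
    (hu : ∀ n, u n ∈ H) {K : Set (M × M)} (hK : IsCompact K)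
    (hfreq : ∃ᶠ n in atTop, ((u n : M), ((u n)⁻¹ : Mˣ).val) ∈ K) : ¬ Function.Injective u := by
  intro hinj
  obtain ⟨⟨A, B⟩, -, φ, hφ, hlim⟩ := hK.tendsto_subseq' hfreq
  have hA : Tendsto (fun j ↦ (u (φ j) : M)) atTop (𝓝 A) := (continuous_fst.tendsto _).comp hlim
  have hB : Tendsto (fun j ↦ ((u (φ j))⁻¹ : Mˣ).val) atTop (𝓝 B) :=
    (continuous_snd.tendsto _).comp hlim
  have hAB : A * B = 1 := tendsto_nhds_unique (hA.mul hB) (by simp)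
  have hD : Tendsto (fun j ↦ ((u (φ (j + 1)) * (u (φ j))⁻¹ : Mˣ) : M)) atTop (𝓝 1) := by
    simpa [hAB] using (hA.comp (tendsto_add_atTop_nat 1)).mul hB
  have hmem : ∀ j, ((u (φ (j + 1)) * (u (φ j))⁻¹ : Mˣ) : M) ∈ Units.val '' (H : Set Mˣ) :=
    fun j ↦ ⟨_, H.mul_mem (hu _) (H.inv_mem (hu _)), rfl⟩
  have hG : Tendsto (fun j ↦ (⟨_, hmem j⟩ : Units.val '' (H : Set Mˣ))) atTop
      (𝓝 ⟨1, 1, H.one_mem, rfl⟩) := tendsto_subtype_rng.2 hD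
  rw [nhds_discrete, tendsto_pure] at hG
  obtain ⟨j, hj⟩ := hG.exists
  have hj' : u (φ (j + 1)) = u (φ j) := mul_inv_eq_one.mp (Units.ext (congrArg Subtype.val hj))
  exact (hφ (Nat.lt_succ_self j)).ne' (hinj hj')

theorem Subgroup.forall_mem_of_mul_mul_inv_succ {G : Type*} [Group G] {H : Subgroup G} {t : G}
    {u : ℕ → G} (h₀ : u 0 ∈ H) (ht : t ∈ H) (hu : ∀ n, u (n + 1) = u n * t * (u n)⁻¹) :
    ∀ n, u n ∈ H
  | 0 => h₀
  | n + 1 => hu n ▸ H.mul_mem (H.mul_mem (forall_mem_of_mul_mul_inv_succ h₀ ht hu n) ht)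
      (H.inv_mem (forall_mem_of_mul_mul_inv_succ h₀ ht hu n))

theorem strictAnti_and_tendsto_zero_of_le_mul_one_add {x : ℕ → ℝ} {β : ℝ} (hx : ∀ n, 0 < x n)
    (hβ : 0 ≤ β) (h₀ : β * (1 + x 0) < 1) (hstep : ∀ n, x (n + 1) ≤ β * (x n * (1 + x n))) :
    StrictAnti x ∧ Tendsto x atTop (𝓝 0) := by
  have hQ : 0 ≤ β * (1 + x 0) := mul_nonneg hβ (by linarith [hx 0])
  have hcontr : ∀ n, x n ≤ x 0 → x (n + 1) ≤ β * (1 + x 0) * x n := fun n hn ↦ by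
    calc x (n + 1) ≤ β * (x n * (1 + x n)) := hstep n
      _ ≤ β * (x n * (1 + x 0)) := by gcongr; exact (hx n).le
      _ = β * (1 + x 0) * x n := by ring
  have hle : ∀ n, x n ≤ x 0 := fun n ↦ by
    induction n with
    | zero => exact le_rfl
    | succ n ih => exact ((hcontr n ih).trans (mul_le_of_le_one_left (hx n).le h₀.le)).trans ih
  refine ⟨strictAnti_nat_of_succ_lt fun n ↦
    (hcontr n (hle n)).trans_lt (mul_lt_of_lt_one_left (hx n) h₀), ?_⟩
  refine squeeze_zero (fun n ↦ (hx n).le) (fun n ↦ le_geom hQ n fun k _ ↦ hcontr k (hle k)) ?_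
  simpa using (tendsto_pow_atTop_nhds_zero_of_lt_one hQ h₀).mul_const (x 0)

theorem one_add_lt_zpow_and_sq_le_zpow {L y : ℝ} (hL : 2 ≤ L) (hy : 0 ≤ y) :
    1 + y < L ^ (⌊1 + y⌋ + 1) ∧ L ^ 2 ≤ L ^ (⌊1 + y⌋ + 1) := by
  rw [← Int.natCast_floor_eq_floor (by positivity), ← Nat.cast_succ, zpow_natCast]
  have h1 : 1 ≤ ⌊1 + y⌋₊ := Nat.le_floor (by simpa using hy)
  refine ⟨?_, pow_le_pow_right₀ (by linarith) (by omega)⟩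
  calc 1 + y < ⌊1 + y⌋₊ + 1 := Nat.lt_floor_add_one _
    _ ≤ (2 : ℝ) ^ (⌊1 + y⌋₊ + 1) := by exact_mod_cast (Nat.lt_two_pow_self).le
    _ ≤ L ^ (⌊1 + y⌋₊ + 1) := pow_le_pow_left₀ (by norm_num) hL _

namespace QuaternionJorgensen

local notation "M₂" => Matrix (Fin 2) (Fin 2) ℍ[ℝ]

/-- The paper's `α_A`, the square of the Dieudonné determinant. -/
noncomputable def dieudonneDetSq (A : M₂) : ℝ :=
  ‖A 0 0‖ ^ 2 * ‖A 1 1‖ ^ 2 + ‖A 0 1‖ ^ 2 * ‖A 1 0‖ ^ 2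
    - 2 * (A 0 0 * star (A 1 0) * A 1 1 * star (A 0 1)).re

theorem dieudonneDetSq_of (a b c d : ℍ[ℝ]) : dieudonneDetSq !![a, b; c, d] =
    ‖a‖ ^ 2 * ‖d‖ ^ 2 + ‖b‖ ^ 2 * ‖c‖ ^ 2 - 2 * (a * star c * d * star b).re := rfl

theorem dieudonneDetSq_one : dieudonneDetSq 1 = 1 := by
  simp [dieudonneDetSq]

theorem sq_norm_eq_sum (q : ℍ[ℝ]) :
    ‖q‖ ^ 2 = q.re ^ 2 + q.imI ^ 2 + q.imJ ^ 2 + q.imK ^ 2 := by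
  rw [sq, ← normSq_eq_norm_mul_self, normSq_def']

theorem dieudonneDetSq_lower_mul (m : ℍ[ℝ]) (Z : M₂) :
    dieudonneDetSq (!![1, 0; m, 1] * Z) = dieudonneDetSq Z := by
  rw [eta_fin_two Z]
  simp only [mul_fin_two, one_mul, zero_mul, add_zero, dieudonneDetSq_of, sq_norm_eq_sum,
    re_mul, imI_mul, imJ_mul, imK_mul, re_add, imI_add, imJ_add, imK_add, re_star, imI_star,
    imJ_star, imK_star]
  ring

theorem dieudonneDetSq_swap_mul (Z : M₂) :
    dieudonneDetSq (!![0, 1; 1, 0] * Z) = dieudonneDetSq Z := by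
  rw [eta_fin_two Z]
  simp only [mul_fin_two, one_mul, zero_mul, add_zero, zero_add, dieudonneDetSq_of,
    sq_norm_eq_sum, re_mul, imI_mul, imJ_mul, imK_mul, re_star, imI_star, imJ_star, imK_star]
  ring

theorem dieudonneDetSq_diagonal_mul (x y : ℍ[ℝ]) (Z : M₂) :
    dieudonneDetSq (!![x, 0; 0, y] * Z) = ‖x‖ ^ 2 * ‖y‖ ^ 2 * dieudonneDetSq Z := by
  rw [eta_fin_two Z]
  simp only [mul_fin_two, zero_mul, add_zero, zero_add, dieudonneDetSq_of, sq_norm_eq_sum,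
    re_mul, imI_mul, imJ_mul, imK_mul, re_star, imI_star, imJ_star, imK_star]
  ring

theorem dieudonneDetSq_antidiagonal_swap (a b c d : ℍ[ℝ]) :
    dieudonneDetSq !![d, c; b, a] = dieudonneDetSq !![a, b; c, d] := by
  simp only [dieudonneDetSq_of, sq_norm_eq_sum, re_mul, imI_mul, imJ_mul, imK_mul, re_star,
    imI_star, imJ_star, imK_star]
  ring

theorem dieudonneDetSq_upper_mul (m : ℍ[ℝ]) (Z : M₂) :
    dieudonneDetSq (!![1, m; 0, 1] * Z) = dieudonneDetSq Z := by
  have h : !![1, m; 0, 1] * Z = !![0, 1; 1, 0] * (!![1, 0; m, 1] * (!![0, 1; 1, 0] * Z)) := by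
    simp only [← Matrix.mul_assoc, mul_fin_two]
    simp
  rw [h, dieudonneDetSq_swap_mul, dieudonneDetSq_lower_mul, dieudonneDetSq_swap_mul]

theorem eq_lower_mul_diagonal_mul_upper {a : ℍ[ℝ]} (b c d : ℍ[ℝ]) (ha : a ≠ 0) :
    !![a, b; c, d] =
      !![1, 0; c * a⁻¹, 1] * (!![a, 0; 0, d - c * a⁻¹ * b] * !![1, a⁻¹ * b; 0, 1]) := by
  simp [mul_assoc, ha]

theorem dieudonneDetSq_of_mul {a : ℍ[ℝ]} (b c d : ℍ[ℝ]) (ha : a ≠ 0) (Y : M₂) :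
    dieudonneDetSq (!![a, b; c, d] * Y) =
      ‖a‖ ^ 2 * ‖d - c * a⁻¹ * b‖ ^ 2 * dieudonneDetSq Y := by
  rw [eq_lower_mul_diagonal_mul_upper b c d ha, Matrix.mul_assoc, Matrix.mul_assoc,
    dieudonneDetSq_lower_mul, dieudonneDetSq_diagonal_mul, dieudonneDetSq_upper_mul]

theorem dieudonneDetSq_of_ne_zero {a : ℍ[ℝ]} (b c d : ℍ[ℝ]) (ha : a ≠ 0) :
    dieudonneDetSq !![a, b; c, d] = ‖a‖ ^ 2 * ‖d - c * a⁻¹ * b‖ ^ 2 := by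
  simpa [dieudonneDetSq_one] using dieudonneDetSq_of_mul b c d ha 1

theorem dieudonneDetSq_mul {X : M₂} (hX : X 0 0 ≠ 0) (Y : M₂) :
    dieudonneDetSq (X * Y) = dieudonneDetSq X * dieudonneDetSq Y := by
  have h := dieudonneDetSq_of_mul (X 0 1) (X 1 0) (X 1 1) hX Y
  rwa [← dieudonneDetSq_of_ne_zero _ _ _ hX, ← eta_fin_two X] at h

theorem sq_sub_le_dieudonneDetSq (a b c d : ℍ[ℝ]) :
    (‖a‖ * ‖d‖ - ‖b‖ * ‖c‖) ^ 2 ≤ dieudonneDetSq !![a, b; c, d] := by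
  have h := real_inner_le_norm (a * star c * d) b
  rw [inner_def, norm_mul, norm_mul, norm_star] at h
  rw [dieudonneDetSq_of]
  nlinarith

theorem norm_mul_norm_le_of_dieudonneDetSq_eq_one {a b c d : ℍ[ℝ]}
    (h : dieudonneDetSq !![a, b; c, d] = 1) : ‖a‖ * ‖d‖ ≤ 1 + ‖b‖ * ‖c‖ := by
  nlinarith [sq_sub_le_dieudonneDetSq a b c d]

theorem eq_neg_inv_mul_of_mul_add_eq_zero {x y u v : ℍ[ℝ]} (hx : x ≠ 0)
    (h : x * u + y * v = 0) : u = -(x⁻¹ * (y * v)) := by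
  rw [eq_neg_iff_add_eq_zero, ← mul_right_inj' hx, mul_add, mul_inv_cancel_left₀ hx, h, mul_zero]

/-- The entries `q, s` of the second column of the inverse of `!![a, b; c, d]`: `s` is the
inverse of the Schur complement `d - c a⁻¹ b`, whose norm is `‖a‖⁻¹` when `α = 1`. -/
theorem norm_eq_of_mul_add_mul {a b c d q s : ℍ[ℝ]} (ha : a ≠ 0)
    (hα : dieudonneDetSq !![a, b; c, d] = 1) (h₀ : a * q + b * s = 0)
    (h₁ : c * q + d * s = 1) : ‖s‖ = ‖a‖ ∧ ‖q‖ = ‖b‖ := by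
  have hq := eq_neg_inv_mul_of_mul_add_eq_zero ha h₀
  have hs : (d - c * a⁻¹ * b) * s = 1 := by
    rw [← h₁, hq]; noncomm_ring
  have had : ‖a‖ * ‖d - c * a⁻¹ * b‖ = 1 := by
    rw [dieudonneDetSq_of_ne_zero b c d ha, ← mul_pow] at hα
    exact (pow_eq_one_iff_of_nonneg (by positivity) two_ne_zero).mp hα
  have hds : ‖d - c * a⁻¹ * b‖ * ‖s‖ = 1 := by rw [← norm_mul, hs, norm_one]
  have hsa : ‖s‖ = ‖a‖ := by linear_combination ‖a‖ * hds - ‖s‖ * had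
  refine ⟨hsa, ?_⟩
  rw [hq, norm_neg, norm_mul, norm_mul, norm_inv, hsa]
  field_simp [norm_ne_zero_iff.mpr ha]

theorem ne_zero_and_ne_zero_of_mul_add_mul {x y u v : ℍ[ℝ]} (lam mu : ℍ[ℝ])
    (h : x * u + y * v = 0) (h' : x * lam * u + y * mu * v ≠ 0) : x ≠ 0 ∧ y ≠ 0 := by
  constructor <;> rintro rfl <;> apply h'
  · obtain rfl | rfl : y = 0 ∨ v = 0 := by simpa using h
    all_goals simp
  · obtain rfl | rfl : x = 0 ∨ u = 0 := by simpa using h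
    all_goals simp

theorem norm_mul_mul_add_mul_mul {x y u v : ℍ[ℝ]} (lam mu : ℍ[ℝ]) (hx : x ≠ 0) (hy : y ≠ 0)
    (h : x * u + y * v = 0) :
    ‖x * lam * u + y * mu * v‖ = ‖lam - x⁻¹ * y * mu * (x⁻¹ * y)⁻¹‖ * (‖y‖ * ‖v‖) := by
  have he : x⁻¹ * y ≠ 0 := mul_ne_zero (inv_ne_zero hx) hy
  have key : x * lam * u + y * mu * v =
      -(x * ((lam - x⁻¹ * y * mu * (x⁻¹ * y)⁻¹) * (x⁻¹ * y * v))) := by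
    rw [eq_neg_inv_mul_of_mul_add_eq_zero hx h, sub_mul, mul_assoc _ (x⁻¹ * y)⁻¹,
      inv_mul_cancel_left₀ he]
    simp only [mul_sub, mul_neg, ← mul_assoc, mul_inv_cancel₀ hx, one_mul]
    abel
  rw [key, norm_neg]
  simp only [norm_mul, norm_inv]
  field_simp

theorem norm_mul_sub_conj_le_sSup (lam mu : ℍ[ℝ]) {e f : ℍ[ℝ]} (he : e ≠ 0) (hf : f ≠ 0) :
    ‖(lam - e * mu * e⁻¹) * (lam - f * mu * f⁻¹)‖ ≤ sSup {x : ℝ | ∃ e f : ℍ[ℝ], e ≠ 0 ∧ f ≠ 0 ∧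
      x = ‖(lam - e * mu * e⁻¹) * (lam - f * mu * f⁻¹)‖} := by
  have hconj : ∀ e : ℍ[ℝ], e ≠ 0 → ‖lam - e * mu * e⁻¹‖ ≤ ‖lam‖ + ‖mu‖ := fun e he ↦ by
    refine (norm_sub_le _ _).trans_eq ?_
    rw [norm_mul, norm_mul, norm_inv]
    field_simp [norm_ne_zero_iff.mpr he]
  refine le_csSup ⟨(‖lam‖ + ‖mu‖) * (‖lam‖ + ‖mu‖), ?_⟩ ⟨e, f, he, hf, rfl⟩
  rintro _ ⟨e, f, he, hf, rfl⟩
  rw [norm_mul]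
  exact mul_le_mul (hconj e he) (hconj f hf) (norm_nonneg _) (by positivity)

theorem norm_sub_conj_mul_le_one {lam mu : ℍ[ℝ]} {β L : ℝ}
    (hβ : ∀ e f : ℍ[ℝ], e ≠ 0 → f ≠ 0 → ‖(lam - e * mu * e⁻¹) * (lam - f * mu * f⁻¹)‖ ≤ β)
    (hβL : β * L ^ 2 < 1) {e : ℍ[ℝ]} (he : e ≠ 0) :
    ‖lam - e * mu * e⁻¹‖ * L ≤ 1 := by
  have h := hβ e e he he
  rw [norm_mul] at h
  nlinarith [norm_nonneg (lam - e * mu * e⁻¹)]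

section conj

variable {lam mu a b c d a' b' c' d' : ℍ[ℝ]} {t g : M₂ˣ}

theorem conj_entries (ht : (t : M₂) = !![lam, 0; 0, mu]) (hg : (g : M₂) = !![a, b; c, d])
    (hg' : ((g * t * g⁻¹ : M₂ˣ) : M₂) = !![a', b'; c', d']) :
    (a' = a * lam * (↑g⁻¹ : M₂) 0 0 + b * mu * (↑g⁻¹ : M₂) 1 0 ∧
      b' = a * lam * (↑g⁻¹ : M₂) 0 1 + b * mu * (↑g⁻¹ : M₂) 1 1) ∧
      c' = c * lam * (↑g⁻¹ : M₂) 0 0 + d * mu * (↑g⁻¹ : M₂) 1 0 ∧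
      d' = c * lam * (↑g⁻¹ : M₂) 0 1 + d * mu * (↑g⁻¹ : M₂) 1 1 := by
  rw [Units.val_mul, Units.val_mul, ht, hg, eta_fin_two (↑g⁻¹ : M₂)] at hg'
  simpa [eq_comm] using hg'

theorem mul_inv_entries (hg : (g : M₂) = !![a, b; c, d]) :
    (a * (↑g⁻¹ : M₂) 0 0 + b * (↑g⁻¹ : M₂) 1 0 = 1 ∧
      a * (↑g⁻¹ : M₂) 0 1 + b * (↑g⁻¹ : M₂) 1 1 = 0) ∧
      c * (↑g⁻¹ : M₂) 0 0 + d * (↑g⁻¹ : M₂) 1 0 = 0 ∧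
      c * (↑g⁻¹ : M₂) 0 1 + d * (↑g⁻¹ : M₂) 1 1 = 1 := by
  have h := g.mul_inv
  rw [hg, eta_fin_two (↑g⁻¹ : M₂), mul_fin_two, one_fin_two] at h
  simpa using h

theorem norm_inv_apply (hg : (g : M₂) = !![a, b; c, d]) (hα : dieudonneDetSq !![a, b; c, d] = 1)
    (ha : a ≠ 0) (hd : d ≠ 0) :
    ‖(↑g⁻¹ : M₂) 0 0‖ = ‖d‖ ∧ ‖(↑g⁻¹ : M₂) 0 1‖ = ‖b‖ ∧
      ‖(↑g⁻¹ : M₂) 1 0‖ = ‖c‖ ∧ ‖(↑g⁻¹ : M₂) 1 1‖ = ‖a‖ := by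
  obtain ⟨⟨h₀₀, h₀₁⟩, h₁₀, h₁₁⟩ := mul_inv_entries hg
  obtain ⟨n₁₁, n₀₁⟩ := norm_eq_of_mul_add_mul ha hα h₀₁ h₁₁
  obtain ⟨n₀₀, n₁₀⟩ := norm_eq_of_mul_add_mul hd (by rwa [dieudonneDetSq_antidiagonal_swap])
    (by rwa [add_comm]) (by rwa [add_comm])
  exact ⟨n₀₀, n₀₁, n₁₀, n₁₁⟩

theorem norm_inv_apply_le {C : ℝ} (hg : (g : M₂) = !![a, b; c, d])
    (hα : dieudonneDetSq !![a, b; c, d] = 1) (ha : a ≠ 0) (hd : d ≠ 0)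
    (hC : ∀ i j, ‖(g : M₂) i j‖ ≤ C) (i j : Fin 2) : ‖(↑g⁻¹ : M₂) i j‖ ≤ C := by
  obtain ⟨h00, h01, h10, h11⟩ := norm_inv_apply hg hα ha hd
  simp only [hg] at hC
  fin_cases i <;> fin_cases j
  · simpa [h00] using hC 1 1
  · simpa [h01] using hC 0 1
  · simpa [h10] using hC 1 0
  · simpa [h11] using hC 0 0

theorem dieudonneDetSq_conj (ht : (t : M₂) = !![lam, 0; 0, mu]) (hg : (g : M₂) = !![a, b; c, d])
    (ha : a ≠ 0) : dieudonneDetSq (g * t * g⁻¹ : M₂ˣ) = ‖lam‖ ^ 2 * ‖mu‖ ^ 2 := by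
  have hg₀ : (g : M₂) 0 0 ≠ 0 := by simpa [hg] using ha
  have hinv : dieudonneDetSq g * dieudonneDetSq ↑g⁻¹ = 1 := by
    rw [← dieudonneDetSq_mul hg₀, g.mul_inv, dieudonneDetSq_one]
  rw [Units.val_mul, Units.val_mul, Matrix.mul_assoc, dieudonneDetSq_mul hg₀, ht,
    dieudonneDetSq_diagonal_mul]
  linear_combination ‖lam‖ ^ 2 * ‖mu‖ ^ 2 * hinv

variable (ht : (t : M₂) = !![lam, 0; 0, mu]) (hg : (g : M₂) = !![a, b; c, d])
  (hg' : ((g * t * g⁻¹ : M₂ˣ) : M₂) = !![a', b'; c', d'])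
include ht hg hg'

theorem ne_zero_of_conj (h : b' * c' ≠ 0) : a ≠ 0 ∧ d ≠ 0 := by
  obtain ⟨⟨-, rfl⟩, rfl, -⟩ := conj_entries ht hg hg'
  obtain ⟨⟨-, h₀₁⟩, h₁₀, -⟩ := mul_inv_entries hg
  obtain ⟨hb', hc'⟩ := mul_ne_zero_iff.mp h
  exact ⟨(ne_zero_and_ne_zero_of_mul_add_mul lam mu h₀₁ hb').1,
    (ne_zero_and_ne_zero_of_mul_add_mul lam mu h₁₀ hc').2⟩

variable (hα : dieudonneDetSq !![a, b; c, d] = 1) (ha : a ≠ 0) (hd : d ≠ 0)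
include hα ha hd

theorem norm_conj_offDiag (hb : b ≠ 0) (hc : c ≠ 0) :
    ‖b'‖ = ‖lam - a⁻¹ * b * mu * (a⁻¹ * b)⁻¹‖ * (‖b‖ * ‖a‖) ∧
      ‖c'‖ = ‖lam - c⁻¹ * d * mu * (c⁻¹ * d)⁻¹‖ * (‖d‖ * ‖c‖) := by
  obtain ⟨⟨-, rfl⟩, rfl, -⟩ := conj_entries ht hg hg'
  obtain ⟨⟨-, h₀₁⟩, h₁₀, -⟩ := mul_inv_entries hg
  obtain ⟨-, -, n₁₀, n₁₁⟩ := norm_inv_apply hg hα ha hd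
  rw [norm_mul_mul_add_mul_mul lam mu ha hb h₀₁, norm_mul_mul_add_mul_mul lam mu hc hd h₁₀, n₁₀,
    n₁₁]
  exact ⟨rfl, rfl⟩

theorem norm_conj_offDiag_mul_le {β : ℝ}
    (hβ : ∀ e f : ℍ[ℝ], e ≠ 0 → f ≠ 0 → ‖(lam - e * mu * e⁻¹) * (lam - f * mu * f⁻¹)‖ ≤ β)
    (hb : b ≠ 0) (hc : c ≠ 0) :
    ‖b'‖ * ‖c'‖ ≤ β * (‖b‖ * ‖c‖ * (1 + ‖b‖ * ‖c‖)) := by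
  obtain ⟨hb', hc'⟩ := norm_conj_offDiag ht hg hg' hα ha hd hb hc
  have hef := hβ _ _ (mul_ne_zero (inv_ne_zero ha) hb) (mul_ne_zero (inv_ne_zero hc) hd)
  rw [norm_mul] at hef
  have had := norm_mul_norm_le_of_dieudonneDetSq_eq_one hα
  have hx : 0 ≤ ‖b‖ * ‖c‖ := by positivity
  have key := mul_le_mul hef (mul_le_mul_of_nonneg_left had hx) (by positivity)
    ((mul_nonneg (norm_nonneg _) (norm_nonneg _)).trans hef)
  rw [hb', hc']
  refine Eq.trans_le ?_ key
  ring

theorem mul_norm_conj_offDiag_le {L : ℝ}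
    (hL : ∀ e : ℍ[ℝ], e ≠ 0 → ‖lam - e * mu * e⁻¹‖ * L ≤ 1) (hb : b ≠ 0) (hc : c ≠ 0) :
    L * ‖b'‖ ≤ ‖a‖ * ‖b‖ ∧ L * ‖c'‖ ≤ ‖d‖ * ‖c‖ := by
  obtain ⟨hb', hc'⟩ := norm_conj_offDiag ht hg hg' hα ha hd hb hc
  have he := hL _ (mul_ne_zero (inv_ne_zero ha) hb)
  have hf := hL _ (mul_ne_zero (inv_ne_zero hc) hd)
  rw [hb', hc']
  constructor
  · nlinarith [mul_nonneg (norm_nonneg a) (norm_nonneg b)]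
  · nlinarith [mul_nonneg (norm_nonneg d) (norm_nonneg c)]

theorem norm_conj_diag_le (hlam : ‖lam‖ ≤ 1) :
    ‖a'‖ ≤ 1 + (1 + ‖mu‖) * (‖b‖ * ‖c‖) ∧ ‖d'‖ ≤ ‖mu‖ + (1 + ‖mu‖) * (‖b‖ * ‖c‖) := by
  obtain ⟨⟨rfl, -⟩, -, rfl⟩ := conj_entries ht hg hg'
  obtain ⟨n₀₀, n₀₁, n₁₀, n₁₁⟩ := norm_inv_apply hg hα ha hd
  have had := norm_mul_norm_le_of_dieudonneDetSq_eq_one hα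
  have h₁ := norm_add_le (a * lam * (↑g⁻¹ : M₂) 0 0) (b * mu * (↑g⁻¹ : M₂) 1 0)
  have h₂ := norm_add_le (c * lam * (↑g⁻¹ : M₂) 0 1) (d * mu * (↑g⁻¹ : M₂) 1 1)
  simp only [norm_mul, n₀₀, n₀₁, n₁₀, n₁₁] at h₁ h₂
  have hpos := mul_nonneg (norm_nonneg a) (norm_nonneg d)
  constructor
  · nlinarith [norm_nonneg mu, mul_nonneg (norm_nonneg b) (norm_nonneg c)]
  · nlinarith [norm_nonneg lam, norm_nonneg mu, mul_nonneg (norm_nonneg b) (norm_nonneg c)]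

end conj

section ShimizuLeutbecher

variable {lam mu : ℍ[ℝ]} {β : ℝ} {t : M₂ˣ} {u : ℕ → M₂ˣ} {a b c d : ℕ → ℍ[ℝ]}
  (ht : (t : M₂) = !![lam, 0; 0, mu]) (hu : ∀ n, u (n + 1) = u n * t * (u n)⁻¹)
  (hentries : ∀ n, (u n : M₂) = !![a n, b n; c n, d n]) (hbc : ∀ n, b n * c n ≠ 0)
  (hdet : ‖lam‖ * ‖mu‖ = 1) (hα₀ : dieudonneDetSq !![a 0, b 0; c 0, d 0] = 1)
  (hβ : ∀ e f : ℍ[ℝ], e ≠ 0 → f ≠ 0 → ‖(lam - e * mu * e⁻¹) * (lam - f * mu * f⁻¹)‖ ≤ β)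
  (hβ₀ : β * (1 + ‖b 0‖ * ‖c 0‖) < 1) (hmu : 1 ≤ ‖mu‖)
  (hconj : ∀ e : ℍ[ℝ], e ≠ 0 → ‖lam - e * mu * e⁻¹‖ * (1 + ‖mu‖) ≤ 1)

include hu hentries in
theorem shimizuLeutbecher_conj_eq (n : ℕ) :
    ((u n * t * (u n)⁻¹ : M₂ˣ) : M₂) = !![a (n + 1), b (n + 1); c (n + 1), d (n + 1)] := by
  rw [← hu, hentries]

include ht hu hentries hbc

theorem shimizuLeutbecher_ne_zero (n : ℕ) : a n ≠ 0 ∧ d n ≠ 0 :=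
  ne_zero_of_conj ht (hentries n) (shimizuLeutbecher_conj_eq hu hentries n) (hbc (n + 1))

include hdet hα₀

theorem shimizuLeutbecher_dieudonneDetSq (n : ℕ) : dieudonneDetSq !![a n, b n; c n, d n] = 1 := by
  cases n with
  | zero => exact hα₀
  | succ n =>
    rw [← hentries, hu, dieudonneDetSq_conj ht (hentries n)
      (shimizuLeutbecher_ne_zero ht hu hentries hbc n).1, ← mul_pow, hdet, one_pow]

include hmu in
theorem shimizuLeutbecher_norm_diag_succ_le {n : ℕ} (hn : ‖b n‖ * ‖c n‖ ≤ (1 + ‖mu‖)⁻¹) :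
    ‖a (n + 1)‖ ≤ 1 + ‖mu‖ ∧ ‖d (n + 1)‖ ≤ 1 + ‖mu‖ := by
  have hlam : ‖lam‖ ≤ 1 := by nlinarith [norm_nonneg lam]
  have hx : (1 + ‖mu‖) * (‖b n‖ * ‖c n‖) ≤ 1 := by
    have := mul_le_mul_of_nonneg_left hn (by positivity : (0 : ℝ) ≤ 1 + ‖mu‖)
    rwa [mul_inv_cancel₀ (by positivity)] at this
  obtain ⟨ha, hd⟩ := shimizuLeutbecher_ne_zero ht hu hentries hbc n
  obtain ⟨ha', hd'⟩ := norm_conj_diag_le ht (hentries n) (shimizuLeutbecher_conj_eq hu hentries n)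
    (shimizuLeutbecher_dieudonneDetSq ht hu hentries hbc hdet hα₀ n) ha hd hlam
  constructor <;> linarith

include hconj in
theorem shimizuLeutbecher_norm_offDiag_succ_le {n : ℕ} (hn : ‖a n‖ ≤ 1 + ‖mu‖ ∧ ‖d n‖ ≤ 1 + ‖mu‖) :
    ‖b (n + 1)‖ ≤ ‖b n‖ ∧ ‖c (n + 1)‖ ≤ ‖c n‖ := by
  obtain ⟨ha, hd⟩ := shimizuLeutbecher_ne_zero ht hu hentries hbc n
  obtain ⟨hb, hc⟩ := mul_ne_zero_iff.mp (hbc n)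
  obtain ⟨hb', hc'⟩ := mul_norm_conj_offDiag_le ht (hentries n)
    (shimizuLeutbecher_conj_eq hu hentries n)
    (shimizuLeutbecher_dieudonneDetSq ht hu hentries hbc hdet hα₀ n) ha hd hconj hb hc
  have hL : 0 < 1 + ‖mu‖ := by positivity
  constructor <;> nlinarith [norm_nonneg (b n), norm_nonneg (c n)]

include hβ hβ₀

theorem shimizuLeutbecher_strictAnti_tendsto :
    StrictAnti (fun n ↦ ‖b n‖ * ‖c n‖) ∧ Tendsto (fun n ↦ ‖b n‖ * ‖c n‖) atTop (𝓝 0) := by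
  refine strictAnti_and_tendsto_zero_of_le_mul_one_add
    (fun n ↦ by rw [← norm_mul]; exact norm_pos_iff.2 (hbc n)) ?_ hβ₀ fun n ↦ ?_
  · exact (norm_nonneg _).trans (hβ 1 1 one_ne_zero one_ne_zero)
  obtain ⟨ha, hd⟩ := shimizuLeutbecher_ne_zero ht hu hentries hbc n
  obtain ⟨hb, hc⟩ := mul_ne_zero_iff.mp (hbc n)
  exact norm_conj_offDiag_mul_le ht (hentries n) (shimizuLeutbecher_conj_eq hu hentries n)
    (shimizuLeutbecher_dieudonneDetSq ht hu hentries hbc hdet hα₀ n) ha hd hβ hb hc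

theorem shimizuLeutbecher_injective : Function.Injective u := by
  refine fun m n h ↦
    (shimizuLeutbecher_strictAnti_tendsto ht hu hentries hbc hdet hα₀ hβ hβ₀).1.injective ?_
  simpa [hentries] using congrArg (fun g : M₂ˣ ↦ ‖(g : M₂) 0 1‖ * ‖(g : M₂) 1 0‖) h

include hmu hconj

theorem shimizuLeutbecher_eventually_norm_le : ∃ C, ∀ᶠ n in atTop,
    ∀ i j, ‖(u n : M₂) i j‖ ≤ C ∧ ‖(↑(u n)⁻¹ : M₂) i j‖ ≤ C := by
  obtain ⟨N, hN⟩ := eventually_atTop.mp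
    ((shimizuLeutbecher_strictAnti_tendsto ht hu hentries hbc hdet hα₀ hβ hβ₀).2.eventually
      (ge_mem_nhds (by positivity : (0 : ℝ) < (1 + ‖mu‖)⁻¹)))
  have hdiag : ∀ n ≥ N + 1, ‖a n‖ ≤ 1 + ‖mu‖ ∧ ‖d n‖ ≤ 1 + ‖mu‖ := fun n hn ↦ by
    obtain ⟨m, rfl⟩ : ∃ m, n = m + 1 := ⟨n - 1, by omega⟩
    exact shimizuLeutbecher_norm_diag_succ_le ht hu hentries hbc hdet hα₀ hmu (hN m (by omega))
  have hb := antitoneOn_nat_Ici_of_succ_le (f := fun n ↦ ‖b n‖) fun n hn ↦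
    (shimizuLeutbecher_norm_offDiag_succ_le ht hu hentries hbc hdet hα₀ hconj (hdiag n hn)).1
  have hc := antitoneOn_nat_Ici_of_succ_le (f := fun n ↦ ‖c n‖) fun n hn ↦
    (shimizuLeutbecher_norm_offDiag_succ_le ht hu hentries hbc hdet hα₀ hconj (hdiag n hn)).2
  refine ⟨max (1 + ‖mu‖) (max ‖b (N + 1)‖ ‖c (N + 1)‖),
    eventually_atTop.2 ⟨N + 1, fun n hn ↦ ?_⟩⟩
  have hC : ∀ i j, ‖(u n : M₂) i j‖ ≤ max (1 + ‖mu‖) (max ‖b (N + 1)‖ ‖c (N + 1)‖) := by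
    have hbn : ‖b n‖ ≤ ‖b (N + 1)‖ := hb Set.self_mem_Ici hn hn
    have hcn : ‖c n‖ ≤ ‖c (N + 1)‖ := hc Set.self_mem_Ici hn hn
    intro i j
    fin_cases i <;> fin_cases j <;> simp [hentries, (hdiag n hn).1, (hdiag n hn).2, hbn, hcn]
  obtain ⟨ha, hd⟩ := shimizuLeutbecher_ne_zero ht hu hentries hbc n
  exact fun i j ↦ ⟨hC i j, norm_inv_apply_le (hentries n)
    (shimizuLeutbecher_dieudonneDetSq ht hu hentries hbc hdet hα₀ n) ha hd hC i j⟩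

end ShimizuLeutbecher

end QuaternionJorgensen

open QuaternionJorgensen

theorem quaternion_jorgensen_betaT_Lk_general (a b c d lam mu : ℍ[ℝ])
    (S T : Matrix (Fin 2) (Fin 2) ℍ[ℝ])
    (hS : S = !![a, b; c, d]) (hT : T = !![lam, 0; 0, mu])
    (hαS : ‖a‖ ^ 2 * ‖d‖ ^ 2 + ‖b‖ ^ 2 * ‖c‖ ^ 2 - 2 * (a * star c * d * star b).re = 1)
    (hdetT : ‖lam‖ * ‖mu‖ = 1) (hmu : 1 ≤ ‖mu‖)
    (US UT : (Matrix (Fin 2) (Fin 2) ℍ[ℝ])ˣ)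
    (hUS : Units.val US = S) (hUT : Units.val UT = T)
    (hdisc : DiscreteTopology
      ↥(Units.val '' ((Subgroup.closure {US, UT} :
          Subgroup (Matrix (Fin 2) (Fin 2) ℍ[ℝ])ˣ) : Set (Matrix (Fin 2) (Fin 2) ℍ[ℝ])ˣ)))
    (U : ℕ → (Matrix (Fin 2) (Fin 2) ℍ[ℝ])ˣ)
    (hU0 : U 0 = US)
    (hUrec : ∀ n, U (n + 1) = U n * UT * (U n)⁻¹)
    (aN bN cN dN : ℕ → ℍ[ℝ])
    (hUn : ∀ n, Units.val (U n) = !![aN n, bN n; cN n, dN n])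
    (hbc : ∀ n, bN n * cN n ≠ 0)
    (βT L : ℝ) (k : ℤ)
    (hβT : βT = sSup {x : ℝ | ∃ e f : ℍ[ℝ], e ≠ 0 ∧ f ≠ 0 ∧
      x = ‖(lam - e * mu * e⁻¹) * (lam - f * mu * f⁻¹)‖})
    (hL : L = 1 + ‖mu‖)
    (hk : k = ⌊(1 : ℝ) + ‖b * c‖⌋ + 1) :
    βT * L ^ k ≥ 1 := by
  by_contra! hlt
  have hβ : ∀ e f : ℍ[ℝ], e ≠ 0 → f ≠ 0 →
      ‖(lam - e * mu * e⁻¹) * (lam - f * mu * f⁻¹)‖ ≤ βT :=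
    fun e f he hf ↦ hβT ▸ norm_mul_sub_conj_le_sSup lam mu he hf
  have hβ₀ : 0 ≤ βT := (norm_nonneg _).trans (hβ 1 1 one_ne_zero one_ne_zero)
  obtain ⟨hk₁, hk₂⟩ := one_add_lt_zpow_and_sq_le_zpow (L := L) (by linarith) (norm_nonneg (b * c))
  rw [← hk] at hk₁ hk₂
  have h₀ : !![aN 0, bN 0; cN 0, dN 0] = !![a, b; c, d] := by rw [← hUn, hU0, hUS, hS]
  simp only [EmbeddingLike.apply_eq_iff_eq, vecCons_inj, and_true] at h₀
  obtain ⟨⟨rfl, rfl⟩, rfl, rfl⟩ := h₀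
  have hmem : ∀ n, U n ∈ Subgroup.closure {US, UT} := Subgroup.forall_mem_of_mul_mul_inv_succ
    (hU0 ▸ Subgroup.subset_closure (by simp)) (Subgroup.subset_closure (by simp)) hUrec
  have hβx : βT * (1 + ‖bN 0‖ * ‖cN 0‖) < 1 := by
    rw [← norm_mul]; nlinarith [mul_le_mul_of_nonneg_left hk₁.le hβ₀]
  have hβL : βT * (1 + ‖mu‖) ^ 2 < 1 := by
    rw [← hL]; nlinarith [mul_le_mul_of_nonneg_left hk₂ hβ₀]
  have hconj : ∀ e : ℍ[ℝ], e ≠ 0 → ‖lam - e * mu * e⁻¹‖ * (1 + ‖mu‖) ≤ 1 :=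
    fun e he ↦ norm_sub_conj_mul_le_one hβ hβL he
  obtain ⟨C, hC⟩ := shimizuLeutbecher_eventually_norm_le (hUT.trans hT) hUrec hUn hbc hdetT hαS
    hβ hβx hmu hconj
  exact Subgroup.not_injective_of_frequently_mem_isCompact hdisc hmem
    ((isCompact_setOf_forall_norm_apply_le C).prod (isCompact_setOf_forall_norm_apply_le C))
    (hC.mono fun n hn ↦ ⟨fun i j ↦ (hn i j).1, fun i j ↦ (hn i j).2⟩).frequently
    (shimizuLeutbecher_injective (hUT.trans hT) hUrec hUn hbc hdetT hαS hβ hβx)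

/-- weaker Jørgensen-type inequality `β(T)·L^k ≥ 1` with
`β(T) = sup |(λ − eμe⁻¹)(λ − fμf⁻¹)|`, `L = 1 + |μ|`, `k = ⌊1 + |bc|⌋ + 1`. -/
theorem quaternion_jorgensen_betaT_Lk (a b c d lam mu : ℍ[ℝ])
    (S T : Matrix (Fin 2) (Fin 2) ℍ[ℝ])
    (hS : S = !![a, b; c, d]) (hT : T = !![lam, 0; 0, mu])
    (hαS : ‖a‖ ^ 2 * ‖d‖ ^ 2 + ‖b‖ ^ 2 * ‖c‖ ^ 2 - 2 * (a * star c * d * star b).re = 1)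
    (hdetT : ‖lam‖ * ‖mu‖ = 1) (hmu : 1 ≤ ‖mu‖)
    (hsim : ¬ ∃ q : ℍ[ℝ], q ≠ 0 ∧ mu = q * lam * q⁻¹)
    (US UT : (Matrix (Fin 2) (Fin 2) ℍ[ℝ])ˣ)
    (hUS : Units.val US = S) (hUT : Units.val UT = T)
    (hdisc : DiscreteTopology
      ↥(Units.val '' ((Subgroup.closure {US, UT} :
          Subgroup (Matrix (Fin 2) (Fin 2) ℍ[ℝ])ˣ) : Set (Matrix (Fin 2) (Fin 2) ℍ[ℝ])ˣ)))
    (U : ℕ → (Matrix (Fin 2) (Fin 2) ℍ[ℝ])ˣ)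
    (hU0 : U 0 = US)
    (hUrec : ∀ n, U (n + 1) = U n * UT * (U n)⁻¹)
    (aN bN cN dN : ℕ → ℍ[ℝ])
    (hUn : ∀ n, Units.val (U n) = !![aN n, bN n; cN n, dN n])
    (hbc : ∀ n, bN n * cN n ≠ 0)
    (βT L : ℝ) (k : ℤ)
    (hβT : βT = sSup {x : ℝ | ∃ e f : ℍ[ℝ], e ≠ 0 ∧ f ≠ 0 ∧
      x = ‖(lam - e * mu * e⁻¹) * (lam - f * mu * f⁻¹)‖})
    (hL : L = 1 + ‖mu‖)
    (hk : k = ⌊(1 : ℝ) + ‖b * c‖⌋ + 1) :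
    βT * L ^ k ≥ 1 :=
  quaternion_jorgensen_betaT_Lk_general a b c d lam mu S T hS hT hαS hdetT hmu US UT hUS hUT hdisc U
    hU0 hUrec aN bN cN dN hUn hbc βT L k hβT hL hk
end

section
/- Let S = !![a,b;c,d] and T = !![λ,0;0,μ] be 2×2 quaternionic matrices with α_S = 1 and |λ|·|μ| = 1, where λ is not similar to μ. Suppose the subgroup of units of M₂(ℍ) generated by S and T is discrete, and the Shimizu–Leutbecher sequence S₀ = S, S_{n+1} = S_n·T·S_n⁻¹, S_n = !![a_n,b_n;c_n,d_n], satisfies b_n·c_n ≠ 0 for every n ≥ 0. Let K := (Re λ − Re μ)² + (|Im λ| + |Im μ|)², and suppose the extremal equality K·(1 + |b·c|) = 1 holds. Then for every n ≥ 0 one has K·(1 + |b_n·c_n|) = 1. -/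
/-!
Write `xₙ = |bₙ cₙ|`. The square `α` of the Dieudonné determinant is multiplicative, so every
`Sₙ` has `α(Sₙ) = 1`; the entries of `Sₙ₊₁ = Sₙ T Sₙ⁻¹` then satisfy `|bₙ₊₁|² ≤ K |aₙ bₙ|²` and
`|cₙ₊₁|² ≤ K |dₙ cₙ|²`, while `|aₙ dₙ| ≤ 1 + xₙ`, whence `xₙ₊₁ ≤ K xₙ (1 + xₙ)`. As
`K (1 + x₀) = 1`, this forces `xₙ ≤ x₀`, and once some `x_N < x₀` the sequence decreases
strictly and geometrically to `0`. Conjugating the tail by suitable powers of `T` keeps the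
entries of these group elements and of their inverses bounded (for `|λ| = 1` no conjugation is
needed: `|bₙ|` and `|cₙ|` are then eventually non-increasing), while the strictly decreasing `xₙ`
makes them pairwise distinct, contradicting discreteness.
-/

open Matrix Quaternion
open scoped Quaternion

open Filter Topology

local notation "M₂" => Matrix (Fin 2) (Fin 2) ℍ[ℝ]

section Recursion

variable {K : ℝ} {x : ℕ → ℝ}

theorem le_apply_zero_of_extremal (hx : ∀ n, 0 ≤ x n)
    (hrec : ∀ n, x (n + 1) ≤ K * x n * (1 + x n)) (hK : K * (1 + x 0) = 1) (n : ℕ) :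
    x n ≤ x 0 := by
  have hK0 : 0 ≤ K := by nlinarith [hx 0]
  induction n with
  | zero => exact le_rfl
  | succ n ih =>
    calc x (n + 1) ≤ K * x n * (1 + x n) := hrec n
      _ ≤ K * x 0 * (1 + x 0) := by gcongr <;> nlinarith [hx n, hx 0]
      _ = x 0 := by linear_combination x 0 * hK

/-- Below the fixed point `x 0` the recursion is a contraction with ratio `K (1 + x N)`. -/
theorem strictAnti_tendsto_zero_of_extremal (hx : ∀ n, 0 < x n)
    (hrec : ∀ n, x (n + 1) ≤ K * x n * (1 + x n)) (hK : K * (1 + x 0) = 1) {N : ℕ}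
    (hN : x N < x 0) : (∀ n ≥ N, x (n + 1) < x n) ∧ Tendsto x atTop (𝓝 0) := by
  have hK0 : 0 < K := by nlinarith [hx 0]
  have hθ : K * (1 + x N) < 1 := (mul_lt_mul_of_pos_left (by linarith) hK0).trans_eq hK
  have hθ0 : 0 ≤ K * (1 + x N) := by nlinarith [hx N]
  have hstep : ∀ n, x n ≤ x N → x (n + 1) ≤ K * (1 + x N) * x n := fun n hn =>
    (hrec n).trans (by nlinarith [mul_nonneg (mul_nonneg hK0.le (hx n).le) (sub_nonneg.mpr hn)])
  have hcontr : ∀ n ≥ N, x n ≤ x N ∧ x (n + 1) ≤ K * (1 + x N) * x n := by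
    intro n hn
    induction n, hn using Nat.le_induction with
    | base => exact ⟨le_rfl, hstep N le_rfl⟩
    | succ n _ ih =>
      have hle : x (n + 1) ≤ x N := by nlinarith [hx n, ih.1, ih.2]
      exact ⟨hle, hstep _ hle⟩
  refine ⟨fun n hn => (hcontr n hn).2.trans_lt (by nlinarith [hx n]), ?_⟩
  have hgeom : ∀ k, x (N + k) ≤ (K * (1 + x N)) ^ k * x N := fun k =>
    le_geom (u := fun k => x (N + k)) hθ0 k fun j _ => (hcontr (N + j) (by omega)).2
  refine (tendsto_add_atTop_iff_nat N).mp ?_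
  simp_rw [add_comm _ N]
  refine squeeze_zero (fun k => (hx _).le) hgeom ?_
  simpa using (tendsto_pow_atTop_nhds_zero_of_lt_one hθ0 hθ).mul_const (x N)

end Recursion

theorem exists_one_le_zpow_mul_le {r z : ℝ} (hr : 1 < r) (hz : 0 < z) :
    ∃ n : ℤ, 1 ≤ r ^ n * z ∧ r ^ n * z ≤ r := by
  obtain ⟨n, hn1, hn2⟩ := exists_mem_Ico_zpow (inv_pos.mpr hz) hr
  have hr0 : 0 < r := one_pos.trans hr
  refine ⟨n + 1, ?_, ?_⟩
  · rw [← div_le_iff₀ hz, one_div]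
    exact hn2.le
  · rw [zpow_add_one₀ hr0.ne', mul_comm _ r, mul_assoc]
    refine mul_le_of_le_one_right hr0.le ?_
    rwa [← le_div_iff₀ hz, one_div]

theorem exists_one_le_zpow_mul_le_add_inv {s z : ℝ} (hs : 0 < s) (hs1 : s ≠ 1) (hz : 0 < z) :
    ∃ m : ℤ, 1 ≤ s ^ m * z ∧ s ^ m * z ≤ s + s⁻¹ := by
  rcases hs1.lt_or_gt with hlt | hgt
  · obtain ⟨n, h1, h2⟩ := exists_one_le_zpow_mul_le ((one_lt_inv₀ hs).mpr hlt) hz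
    refine ⟨-n, ?_, ?_⟩ <;> rw [_root_.zpow_neg, ← _root_.inv_zpow]
    · exact h1
    · linarith
  · obtain ⟨n, h1, h2⟩ := exists_one_le_zpow_mul_le hgt hz
    exact ⟨n, h1, by linarith [inv_pos.mpr hs]⟩

theorem eventually_eq_of_tendsto_of_discreteTopology {X ι : Type*} [TopologicalSpace X]
    {s : Set X} [DiscreteTopology s] {l : Filter ι} {f : ι → X} {x : X} (hx : x ∈ s)
    (hf : ∀ i, f i ∈ s) (h : Tendsto f l (𝓝 x)) : ∀ᶠ i in l, f i = x := by
  have hs : Tendsto (fun i => (⟨f i, hf i⟩ : s)) l (𝓝 ⟨x, hx⟩) := tendsto_subtype_rng.mpr h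
  rw [nhds_discrete, tendsto_pure] at hs
  exact hs.mono fun i hi => congrArg Subtype.val hi

/-- Along a subsequence `φ` on which `W` and `W⁻¹` converge, `W (φ k) * W (φ (k + 1))⁻¹ ≠ 1`
would converge to `1`. -/
theorem not_injective_of_discreteTopology_of_isCompact {M : Type*} [Monoid M]
    [TopologicalSpace M] [ContinuousMul M] [T2Space M] [FirstCountableTopology M]
    {Γ : Subgroup Mˣ} [DiscreteTopology (Units.val '' (Γ : Set Mˣ))] {C : Set M}
    (hC : IsCompact C) {W : ℕ → Mˣ} (hWΓ : ∀ k, W k ∈ Γ) (hWC : ∀ k, (W k : M) ∈ C)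
    (hWC' : ∀ k, (↑(W k)⁻¹ : M) ∈ C) : ¬ Function.Injective W := by
  intro hinj
  obtain ⟨⟨X, Y⟩, -, φ, hφ, hlim⟩ :=
    (hC.prod hC).tendsto_subseq (x := fun k => ((W k : M), (↑(W k)⁻¹ : M)))
      fun k => ⟨hWC k, hWC' k⟩
  have hX : Tendsto (fun k => (W (φ k) : M)) atTop (𝓝 X) := hlim.fst_nhds
  have hY : Tendsto (fun k => (↑(W (φ k))⁻¹ : M)) atTop (𝓝 Y) := hlim.snd_nhds
  have hXY : X * Y = 1 := tendsto_nhds_unique (hX.mul hY) (by simp)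
  have hV : Tendsto (fun k => (↑(W (φ k) * (W (φ (k + 1)))⁻¹) : M)) atTop (𝓝 1) := by
    rw [← hXY]
    simpa using hX.mul (hY.comp (tendsto_add_atTop_nat 1))
  have hev := eventually_eq_of_tendsto_of_discreteTopology (s := Units.val '' (Γ : Set Mˣ))
    ⟨1, Γ.one_mem, rfl⟩ (fun k => ⟨_, Γ.mul_mem (hWΓ _) (Γ.inv_mem (hWΓ _)), rfl⟩) hV
  obtain ⟨k, hk⟩ := hev.exists
  exact (hφ (Nat.lt_succ_self k)).ne (hinj (mul_inv_eq_one.mp (Units.ext hk)))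

theorem isCompact_setOf_norm_apply_le {m n α : Type*} [SeminormedAddCommGroup α]
    [ProperSpace α] (R : ℝ) : IsCompact {X : Matrix m n α | ∀ i j, ‖X i j‖ ≤ R} := by
  have hpi : {X : Matrix m n α | ∀ i j, ‖X i j‖ ≤ R} =
      Set.univ.pi fun _ => Set.univ.pi fun _ => Metric.closedBall 0 R := by
    ext X
    exact ⟨fun h i _ j _ => mem_closedBall_zero_iff.mpr (h i j),
      fun h i j => mem_closedBall_zero_iff.mp (h i trivial j trivial)⟩
  rw [hpi]
  exact isCompact_univ_pi fun _ => isCompact_univ_pi fun _ => isCompact_closedBall 0 R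

theorem Matrix.mul_apply_fin_two {R : Type*} [Semiring R] (A B : Matrix (Fin 2) (Fin 2) R)
    (i j : Fin 2) : (A * B) i j = A i 0 * B 0 j + A i 1 * B 1 j := by
  simp [mul_apply, Fin.sum_univ_two]

theorem Matrix.mul_diag_mul_apply_fin_two {R : Type*} [Semiring R]
    (A B : Matrix (Fin 2) (Fin 2) R) (x y : R) (i j : Fin 2) :
    (A * !![x, 0; 0, y] * B) i j = A i 0 * x * B 0 j + A i 1 * y * B 1 j := by
  simp [mul_apply, Fin.sum_univ_two]

theorem Matrix.fin_two_mul_inv {R : Type*} [Semiring R] (A : (Matrix (Fin 2) (Fin 2) R)ˣ) :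
    let B : Matrix (Fin 2) (Fin 2) R := ↑A⁻¹
    A 0 0 * B 0 0 + A 0 1 * B 1 0 = 1 ∧ A 0 0 * B 0 1 + A 0 1 * B 1 1 = 0 ∧
      A 1 0 * B 0 0 + A 1 1 * B 1 0 = 0 ∧ A 1 0 * B 0 1 + A 1 1 * B 1 1 = 1 := by
  simp only [← mul_apply_fin_two, A.mul_inv]
  simp

noncomputable def dieudonneSq (M : M₂) : ℝ :=
  ‖M 0 0‖ ^ 2 * ‖M 1 1‖ ^ 2 + ‖M 0 1‖ ^ 2 * ‖M 1 0‖ ^ 2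
    - 2 * (M 0 0 * star (M 1 0) * M 1 1 * star (M 0 1)).re

theorem Quaternion.sq_norm_eq_normSq (x : ℍ[ℝ]) : ‖x‖ ^ 2 = normSq x := by
  rw [sq, normSq_eq_norm_mul_self]

theorem dieudonneSq_of (a b c d : ℍ[ℝ]) :
    dieudonneSq !![a, b; c, d] =
      ‖a‖ ^ 2 * ‖d‖ ^ 2 + ‖b‖ ^ 2 * ‖c‖ ^ 2 - 2 * (a * star c * d * star b).re := rfl

theorem dieudonneSq_one : dieudonneSq 1 = 1 := by
  rw [one_fin_two, dieudonneSq_of]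
  simp only [norm_one, norm_zero, star_zero, mul_zero, zero_mul, re_zero]
  norm_num

theorem dieudonneSq_swap (a b c d : ℍ[ℝ]) :
    dieudonneSq !![d, c; b, a] = dieudonneSq !![a, b; c, d] := by
  simp only [dieudonneSq_of, sq_norm_eq_normSq, normSq_def', re_mul, imI_mul, imJ_mul, imK_mul,
    re_star, imI_star, imJ_star, imK_star]
  ring

theorem dieudonneSq_mul_unitUpper (M : M₂) (y : ℍ[ℝ]) :
    dieudonneSq (M * !![1, y; 0, 1]) = dieudonneSq M := by
  rw [eta_fin_two M, mul_fin_two, dieudonneSq_of, dieudonneSq_of]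
  simp only [mul_zero, mul_one, add_zero, sq_norm_eq_normSq, normSq_def', re_mul, imI_mul,
    imJ_mul, imK_mul, re_add, imI_add, imJ_add, imK_add, re_star, imI_star, imJ_star, imK_star]
  ring

theorem dieudonneSq_mul_unitLower (M : M₂) (x : ℍ[ℝ]) :
    dieudonneSq (M * !![1, 0; x, 1]) = dieudonneSq M := by
  rw [eta_fin_two M, mul_fin_two, dieudonneSq_of, dieudonneSq_of]
  simp only [mul_zero, mul_one, zero_add, sq_norm_eq_normSq, normSq_def', re_mul, imI_mul,
    imJ_mul, imK_mul, re_add, imI_add, imJ_add, imK_add, re_star, imI_star, imJ_star, imK_star]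
  ring

theorem dieudonneSq_mul_diag (M : M₂) (x y : ℍ[ℝ]) :
    dieudonneSq (M * !![x, 0; 0, y]) = ‖x‖ ^ 2 * ‖y‖ ^ 2 * dieudonneSq M := by
  rw [eta_fin_two M, mul_fin_two, dieudonneSq_of, dieudonneSq_of]
  simp only [mul_zero, zero_add, add_zero, sq_norm_eq_normSq, normSq_def', re_mul, imI_mul,
    imJ_mul, imK_mul, re_star, imI_star, imJ_star, imK_star]
  ring

/-- As `N 0 0 ≠ 0`, `N` factors as unipotent lower times diagonal times unipotent upper, i.e.
right multiplication by `N` is a sequence of column operations. -/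
theorem dieudonneSq_mul (M N : M₂) (hN : N 0 0 ≠ 0) :
    dieudonneSq (M * N) = dieudonneSq M * dieudonneSq N := by
  set p := N 0 0
  set h := N 1 1 - N 1 0 * p⁻¹ * N 0 1
  have hLDU : N = !![1, 0; N 1 0 * p⁻¹, 1] * !![p, 0; 0, h] * !![1, p⁻¹ * N 0 1; 0, 1] := by
    rw [mul_fin_two, mul_fin_two]
    conv_lhs => rw [eta_fin_two N]
    simp [h, p, mul_assoc, mul_inv_cancel_left₀ hN, inv_mul_cancel₀ hN]
  have key : ∀ L : M₂, dieudonneSq (L * N) = ‖p‖ ^ 2 * ‖h‖ ^ 2 * dieudonneSq L := by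
    intro L
    rw [hLDU, ← mul_assoc, ← mul_assoc, dieudonneSq_mul_unitUpper, dieudonneSq_mul_diag,
      dieudonneSq_mul_unitLower]
  rw [key, ← one_mul N, key, dieudonneSq_one]
  ring

theorem dieudonneSq_eq_schur {a : ℍ[ℝ]} (b c d : ℍ[ℝ]) (ha : a ≠ 0) :
    dieudonneSq !![a, b; c, d] = ‖a‖ ^ 2 * ‖d - c * a⁻¹ * b‖ ^ 2 := by
  have hfac : !![a, b; c, d] = !![a, 0; c, d - c * a⁻¹ * b] * !![1, a⁻¹ * b; 0, 1] := by
    rw [mul_fin_two]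
    simp [mul_inv_cancel_left₀ ha, mul_assoc]
  rw [hfac, dieudonneSq_mul_unitUpper, dieudonneSq_of]
  simp

theorem sq_sub_le_dieudonneSq (a b c d : ℍ[ℝ]) :
    (‖a‖ * ‖d‖ - ‖b‖ * ‖c‖) ^ 2 ≤ dieudonneSq !![a, b; c, d] := by
  have hre : (a * star c * d * star b).re ≤ ‖a‖ * ‖c‖ * ‖d‖ * ‖b‖ := by
    have h := abs_real_inner_le_norm (a * star c * d * star b) 1
    simp only [inner_def, star_one, mul_one, norm_one, norm_mul, norm_star] at h
    exact (abs_le.mp h).2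
  rw [dieudonneSq_of]
  nlinarith

theorem norm_mul_le_one_add_of_dieudonneSq_eq_one {a b c d : ℍ[ℝ]}
    (hα : dieudonneSq !![a, b; c, d] = 1) : ‖a‖ * ‖d‖ ≤ 1 + ‖b‖ * ‖c‖ := by
  have h := sq_sub_le_dieudonneSq a b c d
  rw [hα] at h
  nlinarith

theorem eq_neg_inv_mul_of_add_eq_zero {a b q s : ℍ[ℝ]} (ha : a ≠ 0) (h : a * q + b * s = 0) :
    q = -(a⁻¹ * b * s) := by
  rw [eq_neg_iff_add_eq_zero, mul_assoc, ← inv_mul_cancel_left₀ ha q, ← mul_add, h, mul_zero]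

theorem norm_inv_col_eq_of_dieudonneSq_eq_one {a b c d q s : ℍ[ℝ]}
    (hα : dieudonneSq !![a, b; c, d] = 1) (ha : a ≠ 0) (h₁ : a * q + b * s = 0)
    (h₂ : c * q + d * s = 1) : ‖s‖ = ‖a‖ ∧ ‖q‖ = ‖b‖ := by
  have hq := eq_neg_inv_mul_of_add_eq_zero ha h₁
  set h := d - c * a⁻¹ * b
  have hs : ‖h‖ * ‖s‖ = 1 := by
    rw [← norm_mul, ← norm_one (α := ℍ[ℝ]), ← h₂, hq]
    congr 1
    simp only [h]
    noncomm_ring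
  have hah : ‖a‖ * ‖h‖ = 1 := by
    rw [dieudonneSq_eq_schur b c d ha, ← mul_pow] at hα
    exact (pow_eq_one_iff_of_nonneg (by positivity) two_ne_zero).mp hα
  have hsa : ‖s‖ = ‖a‖ := by
    calc ‖s‖ = ‖a‖ * ‖h‖ * ‖s‖ := by rw [hah, one_mul]
      _ = ‖a‖ := by rw [mul_assoc, hs, mul_one]
  refine ⟨hsa, ?_⟩
  rw [hq, norm_neg, norm_mul, norm_mul, norm_inv, hsa]
  field_simp

noncomputable def jorgensenConst (lam mu : ℍ[ℝ]) : ℝ :=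
  (lam.re - mu.re) ^ 2 + (‖lam.im‖ + ‖mu.im‖) ^ 2

theorem jorgensenConst_comm (lam mu : ℍ[ℝ]) : jorgensenConst mu lam = jorgensenConst lam mu := by
  unfold jorgensenConst
  ring

/-- The real part of `lam - mu` contributes orthogonally to the rest of `lam * x - x * mu`. -/
theorem norm_mul_sub_mul_sq_le (lam mu x : ℍ[ℝ]) :
    ‖lam * x - x * mu‖ ^ 2 ≤ jorgensenConst lam mu * ‖x‖ ^ 2 := by
  set r : ℝ := lam.re - mu.re
  have hsplit : lam * x - x * mu = (r : ℍ[ℝ]) * x + (lam.im * x - x * mu.im) := by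
    conv_lhs => rw [← re_add_im lam, ← re_add_im mu]
    simp only [r, coe_sub, add_mul, mul_add, sub_mul, ← coe_commutes mu.re x]
    abel
  have horth : inner ℝ ((r : ℍ[ℝ]) * x) (lam.im * x - x * mu.im) = 0 := by
    simp only [inner_def, re_mul, imI_mul, imJ_mul, imK_mul, re_sub, imI_sub, imJ_sub, imK_sub,
      re_star, imI_star, imJ_star, imK_star, re_coe, imI_coe, imJ_coe, imK_coe, re_im, imI_im,
      imJ_im, imK_im]
    ring
  have him : ‖lam.im * x - x * mu.im‖ ≤ (‖lam.im‖ + ‖mu.im‖) * ‖x‖ := by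
    refine (norm_sub_le _ _).trans ?_
    rw [norm_mul, norm_mul]
    linarith
  rw [hsplit, norm_add_sq_real, horth, norm_mul, norm_coe, Real.norm_eq_abs, jorgensenConst]
  nlinarith [sq_abs r, norm_nonneg (lam.im * x - x * mu.im), norm_nonneg x]

theorem norm_conj_entry_sq_le {a b c d q s : ℍ[ℝ]} (lam mu : ℍ[ℝ])
    (hα : dieudonneSq !![a, b; c, d] = 1) (ha : a ≠ 0) (h₁ : a * q + b * s = 0)
    (h₂ : c * q + d * s = 1) :
    ‖a * lam * q + b * mu * s‖ ^ 2 ≤ jorgensenConst lam mu * (‖a‖ * ‖b‖) ^ 2 := by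
  obtain ⟨hsa, -⟩ := norm_inv_col_eq_of_dieudonneSq_eq_one hα ha h₁ h₂
  have hq := eq_neg_inv_mul_of_add_eq_zero ha h₁
  obtain ⟨e, rfl⟩ : ∃ e, b = a * e := ⟨a⁻¹ * b, (mul_inv_cancel_left₀ ha b).symm⟩
  rw [inv_mul_cancel_left₀ ha] at hq
  have hentry : a * lam * q + a * e * mu * s = -(a * (lam * e - e * mu) * s) := by
    rw [hq]
    noncomm_ring
  rw [hentry, norm_neg, norm_mul, norm_mul, hsa, norm_mul]
  calc (‖a‖ * ‖lam * e - e * mu‖ * ‖a‖) ^ 2 = ‖a‖ ^ 4 * ‖lam * e - e * mu‖ ^ 2 := by ring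
    _ ≤ ‖a‖ ^ 4 * (jorgensenConst lam mu * ‖e‖ ^ 2) := by
        gcongr
        exact norm_mul_sub_mul_sq_le lam mu e
    _ = jorgensenConst lam mu * (‖a‖ * (‖a‖ * ‖e‖)) ^ 2 := by ring

theorem conj_entry_eq_zero {a b p q r s : ℍ[ℝ]} (lam mu : ℍ[ℝ]) (ha : a = 0)
    (h₁ : a * p + b * r = 1) (h₂ : a * q + b * s = 0) : a * lam * q + b * mu * s = 0 := by
  subst ha
  simp only [zero_mul, zero_add] at h₁ h₂ ⊢
  rw [(mul_eq_zero.mp h₂).resolve_left (left_ne_zero_of_mul_eq_one h₁), mul_zero]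

section Conjugation

variable {lam mu : ℍ[ℝ]} {T : M₂ˣ} (A : M₂ˣ)

theorem conj_apply (hT : (T : M₂) = !![lam, 0; 0, mu]) (i j : Fin 2) :
    (↑(A * T * A⁻¹) : M₂) i j =
      (A : M₂) i 0 * lam * (↑A⁻¹ : M₂) 0 j + (A : M₂) i 1 * mu * (↑A⁻¹ : M₂) 1 j := by
  rw [Units.val_mul, Units.val_mul, hT, mul_diag_mul_apply_fin_two]

theorem conj_apply_zero_one_eq_zero (hT : (T : M₂) = !![lam, 0; 0, mu])
    (ha : (A : M₂) 0 0 = 0) : (↑(A * T * A⁻¹) : M₂) 0 1 = 0 := by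
  obtain ⟨h₁, h₂, -, -⟩ := fin_two_mul_inv A
  rw [conj_apply A hT]
  exact conj_entry_eq_zero lam mu ha h₁ h₂

theorem conj_apply_one_zero_eq_zero (hT : (T : M₂) = !![lam, 0; 0, mu])
    (hd : (A : M₂) 1 1 = 0) : (↑(A * T * A⁻¹) : M₂) 1 0 = 0 := by
  obtain ⟨-, -, h₃, h₄⟩ := fin_two_mul_inv A
  rw [conj_apply A hT, add_comm]
  exact conj_entry_eq_zero mu lam hd (by rwa [add_comm]) (by rwa [add_comm])

theorem inv_apply_zero_zero_ne_zero (hd : (A : M₂) 1 1 ≠ 0) : (↑A⁻¹ : M₂) 0 0 ≠ 0 := by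
  intro hp
  obtain ⟨h₁, -, h₃, -⟩ := fin_two_mul_inv A
  rw [hp, mul_zero, zero_add] at h₁ h₃
  exact hd ((mul_eq_zero.mp h₃).resolve_right (right_ne_zero_of_mul_eq_one h₁))

theorem dieudonneSq_conj (hT : (T : M₂) = !![lam, 0; 0, mu]) (h : (↑A⁻¹ : M₂) 0 0 ≠ 0) :
    dieudonneSq ↑(A * T * A⁻¹) = ‖lam‖ ^ 2 * ‖mu‖ ^ 2 := by
  have hinv : dieudonneSq ↑A * dieudonneSq ↑A⁻¹ = 1 := by
    rw [← dieudonneSq_mul _ _ h, A.mul_inv, dieudonneSq_one]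
  rw [Units.val_mul, Units.val_mul, hT, dieudonneSq_mul _ _ h, dieudonneSq_mul_diag, mul_assoc,
    hinv, mul_one]

variable {A}

theorem norm_inv_apply (hα : dieudonneSq A = 1) (ha : (A : M₂) 0 0 ≠ 0)
    (hd : (A : M₂) 1 1 ≠ 0) :
    ‖(↑A⁻¹ : M₂) 0 0‖ = ‖(A : M₂) 1 1‖ ∧ ‖(↑A⁻¹ : M₂) 0 1‖ = ‖(A : M₂) 0 1‖ ∧
      ‖(↑A⁻¹ : M₂) 1 0‖ = ‖(A : M₂) 1 0‖ ∧ ‖(↑A⁻¹ : M₂) 1 1‖ = ‖(A : M₂) 0 0‖ := by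
  rw [eta_fin_two (A : M₂)] at hα
  obtain ⟨h₁, h₂, h₃, h₄⟩ := fin_two_mul_inv A
  obtain ⟨hs, hq⟩ := norm_inv_col_eq_of_dieudonneSq_eq_one hα ha h₂ h₄
  obtain ⟨hp, hr⟩ := norm_inv_col_eq_of_dieudonneSq_eq_one (by rwa [dieudonneSq_swap]) hd
    (by rwa [add_comm]) (by rwa [add_comm])
  exact ⟨hp, hq, hr, hs⟩

theorem norm_conj_apply_zero_one_sq_le (hT : (T : M₂) = !![lam, 0; 0, mu])
    (hα : dieudonneSq A = 1) (ha : (A : M₂) 0 0 ≠ 0) :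
    ‖(↑(A * T * A⁻¹) : M₂) 0 1‖ ^ 2 ≤
      jorgensenConst lam mu * (‖(A : M₂) 0 0‖ * ‖(A : M₂) 0 1‖) ^ 2 := by
  rw [eta_fin_two (A : M₂)] at hα
  obtain ⟨-, h₂, -, h₄⟩ := fin_two_mul_inv A
  rw [conj_apply A hT]
  exact norm_conj_entry_sq_le lam mu hα ha h₂ h₄

theorem norm_conj_apply_one_zero_sq_le (hT : (T : M₂) = !![lam, 0; 0, mu])
    (hα : dieudonneSq A = 1) (hd : (A : M₂) 1 1 ≠ 0) :
    ‖(↑(A * T * A⁻¹) : M₂) 1 0‖ ^ 2 ≤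
      jorgensenConst lam mu * (‖(A : M₂) 1 1‖ * ‖(A : M₂) 1 0‖) ^ 2 := by
  rw [eta_fin_two (A : M₂), ← dieudonneSq_swap] at hα
  obtain ⟨h₁, -, h₃, -⟩ := fin_two_mul_inv A
  rw [conj_apply A hT, add_comm, ← jorgensenConst_comm]
  exact norm_conj_entry_sq_le mu lam hα hd (by rwa [add_comm]) (by rwa [add_comm])

theorem norm_conj_apply_zero_zero_le (hT : (T : M₂) = !![lam, 0; 0, mu])
    (hα : dieudonneSq A = 1) (ha : (A : M₂) 0 0 ≠ 0) (hd : (A : M₂) 1 1 ≠ 0) :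
    ‖(↑(A * T * A⁻¹) : M₂) 0 0‖ ≤
      ‖lam‖ * (‖(A : M₂) 0 0‖ * ‖(A : M₂) 1 1‖) + ‖mu‖ * (‖(A : M₂) 0 1‖ * ‖(A : M₂) 1 0‖) := by
  obtain ⟨hp, -, hr, -⟩ := norm_inv_apply hα ha hd
  rw [conj_apply A hT]
  refine (norm_add_le _ _).trans_eq ?_
  rw [norm_mul, norm_mul, norm_mul, norm_mul, hp, hr]
  ring

theorem norm_conj_apply_one_one_le (hT : (T : M₂) = !![lam, 0; 0, mu])
    (hα : dieudonneSq A = 1) (ha : (A : M₂) 0 0 ≠ 0) (hd : (A : M₂) 1 1 ≠ 0) :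
    ‖(↑(A * T * A⁻¹) : M₂) 1 1‖ ≤
      ‖mu‖ * (‖(A : M₂) 0 0‖ * ‖(A : M₂) 1 1‖) + ‖lam‖ * (‖(A : M₂) 0 1‖ * ‖(A : M₂) 1 0‖) := by
  obtain ⟨-, hq, -, hs⟩ := norm_inv_apply hα ha hd
  rw [conj_apply A hT]
  refine (norm_add_le _ _).trans_eq ?_
  rw [norm_mul, norm_mul, norm_mul, norm_mul, hq, hs]
  ring

theorem norm_conj_offDiag_le (hT : (T : M₂) = !![lam, 0; 0, mu])
    (hα : dieudonneSq A = 1) (ha : (A : M₂) 0 0 ≠ 0) (hd : (A : M₂) 1 1 ≠ 0) :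
    ‖(↑(A * T * A⁻¹) : M₂) 0 1 * (↑(A * T * A⁻¹) : M₂) 1 0‖ ≤
      jorgensenConst lam mu * ‖(A : M₂) 0 1 * (A : M₂) 1 0‖ *
        (1 + ‖(A : M₂) 0 1 * (A : M₂) 1 0‖) := by
  have hb := norm_conj_apply_zero_one_sq_le hT hα ha
  have hc := norm_conj_apply_one_zero_sq_le hT hα hd
  have had := norm_mul_le_one_add_of_dieudonneSq_eq_one (eta_fin_two (A : M₂) ▸ hα)
  have hK : 0 ≤ jorgensenConst lam mu := by unfold jorgensenConst; positivity
  rw [norm_mul, norm_mul]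
  have hsq : (‖(↑(A * T * A⁻¹) : M₂) 0 1‖ * ‖(↑(A * T * A⁻¹) : M₂) 1 0‖) ^ 2 ≤
      (jorgensenConst lam mu * (‖(A : M₂) 0 0‖ * ‖(A : M₂) 1 1‖) *
        (‖(A : M₂) 0 1‖ * ‖(A : M₂) 1 0‖)) ^ 2 := by
    rw [mul_pow]
    refine (mul_le_mul hb hc (by positivity) (by positivity)).trans_eq ?_
    ring
  calc _ ≤ jorgensenConst lam mu * (‖(A : M₂) 0 0‖ * ‖(A : M₂) 1 1‖) *
        (‖(A : M₂) 0 1‖ * ‖(A : M₂) 1 0‖) :=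
        (pow_le_pow_iff_left₀ (by positivity) (by positivity) two_ne_zero).mp hsq
    _ ≤ jorgensenConst lam mu * (1 + ‖(A : M₂) 0 1‖ * ‖(A : M₂) 1 0‖) *
        (‖(A : M₂) 0 1‖ * ‖(A : M₂) 1 0‖) := by gcongr
    _ = _ := by ring

end Conjugation

noncomputable def normBC (M : M₂) : ℝ := ‖M 0 1 * M 1 0‖

section PowersOfT

variable {lam mu : ℍ[ℝ]} {T : M₂ˣ}

theorem val_zpow_of_val_eq_diag (hT : (T : M₂) = !![lam, 0; 0, mu]) (hlam : lam ≠ 0)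
    (hmu : mu ≠ 0) (m : ℤ) : (↑(T ^ m) : M₂) = !![lam ^ m, 0; 0, mu ^ m] := by
  have hinv : (↑T⁻¹ : M₂) = !![lam⁻¹, 0; 0, mu⁻¹] :=
    Units.inv_eq_of_mul_eq_one_right (by simp [hT, one_fin_two, hlam, hmu])
  induction m using Int.induction_on with
  | zero => simp [one_fin_two]
  | succ n ih =>
    rw [_root_.zpow_add_one, Units.val_mul, ih, hT, mul_fin_two, zpow_add_one₀ hlam,
      zpow_add_one₀ hmu]
    simp
  | pred n ih =>
    rw [_root_.zpow_sub_one, Units.val_mul, ih, hinv, mul_fin_two, zpow_sub_one₀ hlam,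
      zpow_sub_one₀ hmu]
    simp

theorem norm_zpow_conj_apply_le (hT : (T : M₂) = !![lam, 0; 0, mu]) (hdet : ‖lam‖ * ‖mu‖ = 1)
    (m : ℤ) (A : M₂ˣ) {R : ℝ} (h00 : ‖(A : M₂) 0 0‖ ≤ R)
    (h01 : (‖lam‖ ^ 2) ^ m * ‖(A : M₂) 0 1‖ ≤ R) (h10 : (‖lam‖ ^ 2) ^ (-m) * ‖(A : M₂) 1 0‖ ≤ R)
    (h11 : ‖(A : M₂) 1 1‖ ≤ R) (i j : Fin 2) :
    ‖(↑(T ^ m * A * T ^ (-m)) : M₂) i j‖ ≤ R := by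
  have hlam : ‖lam‖ ≠ 0 := left_ne_zero_of_mul_eq_one hdet
  have hmu : ‖mu‖ = ‖lam‖⁻¹ := eq_inv_of_mul_eq_one_right hdet
  have hTm := val_zpow_of_val_eq_diag hT (norm_ne_zero_iff.mp hlam)
    (norm_ne_zero_iff.mp (right_ne_zero_of_mul_eq_one hdet))
  rw [Units.val_mul, Units.val_mul, hTm, hTm, eta_fin_two (A : M₂), mul_fin_two, mul_fin_two]
  have hpow : (‖lam‖ ^ 2) ^ m = (‖lam‖ ^ m) ^ 2 := by
    rw [← zpow_natCast, ← zpow_natCast, ← _root_.zpow_mul, ← _root_.zpow_mul, mul_comm]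
  rw [_root_.zpow_neg, hpow] at h10
  rw [hpow] at h01
  fin_cases i <;> fin_cases j <;> simp [hmu]
  · exact (le_of_eq (by field_simp)).trans h00
  · exact (le_of_eq (by ring)).trans h01
  · exact (le_of_eq (by field_simp)).trans h10
  · exact (le_of_eq (by field_simp)).trans h11

theorem normBC_zpow_conj (hT : (T : M₂) = !![lam, 0; 0, mu]) (hdet : ‖lam‖ * ‖mu‖ = 1)
    (m : ℤ) (A : M₂ˣ) : normBC ↑(T ^ m * A * T ^ (-m)) = normBC A := by
  have hlam : ‖lam‖ ≠ 0 := left_ne_zero_of_mul_eq_one hdet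
  have hmu : ‖mu‖ = ‖lam‖⁻¹ := eq_inv_of_mul_eq_one_right hdet
  have hTm := val_zpow_of_val_eq_diag hT (norm_ne_zero_iff.mp hlam)
    (norm_ne_zero_iff.mp (right_ne_zero_of_mul_eq_one hdet))
  rw [normBC, normBC, Units.val_mul, Units.val_mul, hTm, hTm, eta_fin_two (A : M₂), mul_fin_two,
    mul_fin_two]
  simp [hmu]
  field_simp

end PowersOfT

structure IsShimizuLeutbecher (lam mu : ℍ[ℝ]) (T : M₂ˣ) (U : ℕ → M₂ˣ) : Prop where
  val_T : (T : M₂) = !![lam, 0; 0, mu]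
  norm_mul_norm : ‖lam‖ * ‖mu‖ = 1
  succ : ∀ n, U (n + 1) = U n * T * (U n)⁻¹
  dieudonneSq_zero : dieudonneSq (U 0) = 1
  offDiag_ne_zero : ∀ n, (U n : M₂) 0 1 * (U n : M₂) 1 0 ≠ 0

namespace IsShimizuLeutbecher

variable {lam mu : ℍ[ℝ]} {T : M₂ˣ} {U : ℕ → M₂ˣ}

theorem diag_ne_zero (h : IsShimizuLeutbecher lam mu T U) (n : ℕ) :
    (U n : M₂) 0 0 ≠ 0 ∧ (U n : M₂) 1 1 ≠ 0 := by
  have hne := h.offDiag_ne_zero (n + 1)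
  rw [h.succ] at hne
  refine ⟨fun ha => hne ?_, fun hd => hne ?_⟩
  · rw [conj_apply_zero_one_eq_zero _ h.val_T ha, zero_mul]
  · rw [conj_apply_one_zero_eq_zero _ h.val_T hd, mul_zero]

theorem dieudonneSq_eq_one (h : IsShimizuLeutbecher lam mu T U) (n : ℕ) :
    dieudonneSq (U n) = 1 := by
  cases n with
  | zero => exact h.dieudonneSq_zero
  | succ n =>
    rw [h.succ, dieudonneSq_conj _ h.val_T (inv_apply_zero_zero_ne_zero _ (h.diag_ne_zero n).2),
      ← mul_pow, h.norm_mul_norm, one_pow]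

theorem normBC_pos (h : IsShimizuLeutbecher lam mu T U) (n : ℕ) : 0 < normBC (U n) :=
  norm_pos_iff.mpr (h.offDiag_ne_zero n)

theorem normBC_succ_le (h : IsShimizuLeutbecher lam mu T U) (n : ℕ) :
    normBC (U (n + 1)) ≤ jorgensenConst lam mu * normBC (U n) * (1 + normBC (U n)) := by
  rw [normBC, h.succ]
  exact norm_conj_offDiag_le h.val_T (h.dieudonneSq_eq_one n) (h.diag_ne_zero n).1
    (h.diag_ne_zero n).2

theorem norm_mul_le_one_add_normBC (h : IsShimizuLeutbecher lam mu T U) (n : ℕ) :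
    ‖(U n : M₂) 0 0‖ * ‖(U n : M₂) 1 1‖ ≤ 1 + normBC (U n) := by
  rw [normBC, norm_mul]
  exact norm_mul_le_one_add_of_dieudonneSq_eq_one (eta_fin_two (U n : M₂) ▸ h.dieudonneSq_eq_one n)

theorem norm_succ_apply_zero_zero_le (h : IsShimizuLeutbecher lam mu T U) (n : ℕ) :
    ‖(U (n + 1) : M₂) 0 0‖ ≤ ‖lam‖ + (‖lam‖ + ‖mu‖) * normBC (U n) := by
  have had := h.norm_mul_le_one_add_normBC n
  rw [h.succ]
  refine (norm_conj_apply_zero_zero_le h.val_T (h.dieudonneSq_eq_one n) (h.diag_ne_zero n).1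
    (h.diag_ne_zero n).2).trans ?_
  rw [← norm_mul (_ : ℍ[ℝ]) ((U n : M₂) 1 0), ← normBC]
  nlinarith [norm_nonneg lam]

theorem norm_succ_apply_one_one_le (h : IsShimizuLeutbecher lam mu T U) (n : ℕ) :
    ‖(U (n + 1) : M₂) 1 1‖ ≤ ‖mu‖ + (‖lam‖ + ‖mu‖) * normBC (U n) := by
  have had := h.norm_mul_le_one_add_normBC n
  rw [h.succ]
  refine (norm_conj_apply_one_one_le h.val_T (h.dieudonneSq_eq_one n) (h.diag_ne_zero n).1
    (h.diag_ne_zero n).2).trans ?_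
  rw [← norm_mul (_ : ℍ[ℝ]) ((U n : M₂) 1 0), ← normBC]
  nlinarith [norm_nonneg mu]

theorem mem_of_mem (h : IsShimizuLeutbecher lam mu T U) {Γ : Subgroup M₂ˣ} (hT : T ∈ Γ)
    (h0 : U 0 ∈ Γ) (n : ℕ) : U n ∈ Γ := by
  induction n with
  | zero => exact h0
  | succ n ih => rw [h.succ]; exact Γ.mul_mem (Γ.mul_mem ih hT) (Γ.inv_mem ih)

theorem norm_succ_apply_zero_one_sq_le (h : IsShimizuLeutbecher lam mu T U) (n : ℕ) :
    ‖(U (n + 1) : M₂) 0 1‖ ^ 2 ≤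
      jorgensenConst lam mu * (‖(U n : M₂) 0 0‖ * ‖(U n : M₂) 0 1‖) ^ 2 := by
  rw [h.succ]
  exact norm_conj_apply_zero_one_sq_le h.val_T (h.dieudonneSq_eq_one n) (h.diag_ne_zero n).1

theorem norm_succ_apply_one_zero_sq_le (h : IsShimizuLeutbecher lam mu T U) (n : ℕ) :
    ‖(U (n + 1) : M₂) 1 0‖ ^ 2 ≤
      jorgensenConst lam mu * (‖(U n : M₂) 1 1‖ * ‖(U n : M₂) 1 0‖) ^ 2 := by
  rw [h.succ]
  exact norm_conj_apply_one_zero_sq_le h.val_T (h.dieudonneSq_eq_one n) (h.diag_ne_zero n).2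

theorem exists_norm_diag_le (h : IsShimizuLeutbecher lam mu T U) {C : ℝ}
    (hC : ∀ n, normBC (U n) ≤ C) :
    ∃ R, ∀ n, ‖(U n : M₂) 0 0‖ ≤ R ∧ ‖(U n : M₂) 1 1‖ ≤ R := by
  refine ⟨max (max ‖(U 0 : M₂) 0 0‖ ‖(U 0 : M₂) 1 1‖) (‖lam‖ + ‖mu‖ + (‖lam‖ + ‖mu‖) * C),
    fun n => ?_⟩
  cases n with
  | zero => exact ⟨le_max_of_le_left (le_max_left _ _), le_max_of_le_left (le_max_right _ _)⟩
  | succ n =>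
    have hCn : (‖lam‖ + ‖mu‖) * normBC (U n) ≤ (‖lam‖ + ‖mu‖) * C := by gcongr; exact hC n
    refine ⟨le_max_of_le_right ?_, le_max_of_le_right ?_⟩
    · linarith [h.norm_succ_apply_zero_zero_le n, norm_nonneg mu]
    · linarith [h.norm_succ_apply_one_one_le n, norm_nonneg lam]

/-- Here `|aₙ₊₁|, |dₙ₊₁| ≤ 1 + 2 |bₙcₙ| → 1`, so the factors `K |aₙ|²`, `K |dₙ|²` in the
recursions for `|bₙ|²`, `|cₙ|²` eventually drop below `1`. -/
theorem exists_norm_offDiag_le (h : IsShimizuLeutbecher lam mu T U) (hK : jorgensenConst lam mu < 1)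
    (hlam : ‖lam‖ = 1) (hx : Tendsto (fun n => normBC (U n)) atTop (𝓝 0)) :
    ∃ n₀ R, ∀ n ≥ n₀, ‖(U n : M₂) 0 1‖ ≤ R ∧ ‖(U n : M₂) 1 0‖ ≤ R := by
  have hmu : ‖mu‖ = 1 := by simpa [hlam] using h.norm_mul_norm
  set K := jorgensenConst lam mu
  have hK0 : 0 ≤ K := by unfold K jorgensenConst; positivity
  have hlim : Tendsto (fun n => K * (1 + 2 * normBC (U n)) ^ 2) atTop (𝓝 (K * (1 + 2 * 0) ^ 2)) :=
    ((tendsto_const_nhds.add (hx.const_mul 2)).pow 2).const_mul K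
  obtain ⟨N, hN⟩ := eventually_atTop.mp (hlim.eventually_lt_const (by simpa using hK))
  have hle_of_sq : ∀ {u v w : ℝ} (n : ℕ), n ≥ N → 0 ≤ u → 0 ≤ v → u ^ 2 ≤ K * (w * v) ^ 2 →
      0 ≤ w → w ≤ 1 + 2 * normBC (U n) → u ≤ v := by
    intro u v w n hn hu hv huv hw hwx
    have hKw : K * w ^ 2 ≤ 1 := by
      nlinarith [hN n hn, pow_le_pow_left₀ hw hwx 2]
    refine (pow_le_pow_iff_left₀ hu hv two_ne_zero).mp ?_
    calc u ^ 2 ≤ (K * w ^ 2) * v ^ 2 := huv.trans_eq (by ring)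
      _ ≤ v ^ 2 := mul_le_of_le_one_left (sq_nonneg v) hKw
  have hmono : ∀ n ≥ N + 1, ‖(U (n + 1) : M₂) 0 1‖ ≤ ‖(U n : M₂) 0 1‖ ∧
      ‖(U (n + 1) : M₂) 1 0‖ ≤ ‖(U n : M₂) 1 0‖ := by
    intro n hn
    obtain ⟨n, rfl⟩ : ∃ k, n = k + 1 := ⟨n - 1, by omega⟩
    have ha := h.norm_succ_apply_zero_zero_le n
    have hd := h.norm_succ_apply_one_one_le n
    rw [hlam, hmu] at ha hd
    exact ⟨hle_of_sq n (by omega) (norm_nonneg _) (norm_nonneg _)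
        (h.norm_succ_apply_zero_one_sq_le _) (norm_nonneg _) (by linarith),
      hle_of_sq n (by omega) (norm_nonneg _) (norm_nonneg _) (h.norm_succ_apply_one_zero_sq_le _)
        (norm_nonneg _) (by linarith)⟩
  have hb := antitoneOn_nat_Ici_of_succ_le (f := fun n => ‖(U n : M₂) 0 1‖) fun n hn =>
    (hmono n hn).1
  have hc := antitoneOn_nat_Ici_of_succ_le (f := fun n => ‖(U n : M₂) 1 0‖) fun n hn =>
    (hmono n hn).2
  refine ⟨N + 1, max ‖(U (N + 1) : M₂) 0 1‖ ‖(U (N + 1) : M₂) 1 0‖, fun n hn => ⟨?_, ?_⟩⟩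
  · exact (hb (Set.mem_Ici.mpr le_rfl) (Set.mem_Ici.mpr hn) hn).trans (le_max_left _ _)
  · exact (hc (Set.mem_Ici.mpr le_rfl) (Set.mem_Ici.mpr hn) hn).trans (le_max_right _ _)

/-- For `|λ| ≠ 1`, conjugating `Uₙ` by a suitable power of `T` scales `bₙ` into `[1, s + s⁻¹]`
(`s = |λ|²`); since `|bₙcₙ|` is unchanged, the conjugated `cₙ` is then bounded as well. -/
theorem exists_zpow_balanced (h : IsShimizuLeutbecher lam mu T U) (hlam : ‖lam‖ ≠ 1) {C : ℝ}
    (hC : ∀ n, normBC (U n) ≤ C) :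
    ∃ (m : ℕ → ℤ) (R : ℝ), ∀ n, (‖lam‖ ^ 2) ^ m n * ‖(U n : M₂) 0 1‖ ≤ R ∧
      (‖lam‖ ^ 2) ^ (-m n) * ‖(U n : M₂) 1 0‖ ≤ R := by
  have hs : 0 < ‖lam‖ ^ 2 := by
    have := left_ne_zero_of_mul_eq_one h.norm_mul_norm
    positivity
  have hs1 : ‖lam‖ ^ 2 ≠ 1 := by
    rwa [Ne, pow_eq_one_iff_of_nonneg (norm_nonneg lam) two_ne_zero]
  have hb n : 0 < ‖(U n : M₂) 0 1‖ := norm_pos_iff.mpr (left_ne_zero_of_mul (h.offDiag_ne_zero n))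
  choose m hm using fun n => exists_one_le_zpow_mul_le_add_inv hs hs1 (hb n)
  refine ⟨m, max (‖lam‖ ^ 2 + (‖lam‖ ^ 2)⁻¹) C, fun n => ⟨(hm n).2.trans (le_max_left _ _), ?_⟩⟩
  calc (‖lam‖ ^ 2) ^ (-m n) * ‖(U n : M₂) 1 0‖
      = normBC (U n) / ((‖lam‖ ^ 2) ^ m n * ‖(U n : M₂) 0 1‖) := by
        rw [normBC, norm_mul, _root_.zpow_neg]
        field_simp [(hb n).ne']
    _ ≤ normBC (U n) := div_le_self (h.normBC_pos n).le (hm n).1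
    _ ≤ max (‖lam‖ ^ 2 + (‖lam‖ ^ 2)⁻¹) C := (hC n).trans (le_max_right _ _)

theorem exists_balanced_tail (h : IsShimizuLeutbecher lam mu T U)
    (hK : jorgensenConst lam mu < 1) {C : ℝ} (hC : ∀ n, normBC (U n) ≤ C)
    (hx : Tendsto (fun n => normBC (U n)) atTop (𝓝 0)) :
    ∃ (n₀ : ℕ) (m : ℕ → ℤ) (R : ℝ), ∀ n ≥ n₀, (‖lam‖ ^ 2) ^ m n * ‖(U n : M₂) 0 1‖ ≤ R ∧
      (‖lam‖ ^ 2) ^ (-m n) * ‖(U n : M₂) 1 0‖ ≤ R := by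
  by_cases hlam : ‖lam‖ = 1
  · obtain ⟨n₀, R, hR⟩ := h.exists_norm_offDiag_le hK hlam hx
    exact ⟨n₀, 0, R, by simpa [hlam] using hR⟩
  · obtain ⟨m, R, hR⟩ := h.exists_zpow_balanced hlam hC
    exact ⟨0, m, R, fun n _ => hR n⟩

theorem not_strictAnti_of_balanced (h : IsShimizuLeutbecher lam mu T U) {Γ : Subgroup M₂ˣ}
    [DiscreteTopology (Units.val '' (Γ : Set M₂ˣ))] (hTΓ : T ∈ Γ) (hUΓ : ∀ n, U n ∈ Γ)
    {N : ℕ} {m : ℕ → ℤ} {R : ℝ}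
    (hdiag : ∀ n ≥ N, ‖(U n : M₂) 0 0‖ ≤ R ∧ ‖(U n : M₂) 1 1‖ ≤ R)
    (hoff : ∀ n ≥ N, (‖lam‖ ^ 2) ^ m n * ‖(U n : M₂) 0 1‖ ≤ R ∧
      (‖lam‖ ^ 2) ^ (-m n) * ‖(U n : M₂) 1 0‖ ≤ R) :
    ¬ StrictAnti fun k => normBC (U (N + k)) := by
  intro hanti
  have : FirstCountableTopology M₂ :=
    inferInstanceAs (FirstCountableTopology (Fin 2 → Fin 2 → ℍ[ℝ]))
  set W : ℕ → M₂ˣ := fun k => T ^ m (N + k) * U (N + k) * T ^ (-m (N + k))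
  refine not_injective_of_discreteTopology_of_isCompact (Γ := Γ) (W := W)
    (isCompact_setOf_norm_apply_le R) (fun k => ?_) (fun k => ?_) (fun k => ?_)
    fun i j hij => hanti.injective ?_
  · exact Γ.mul_mem (Γ.mul_mem (Γ.zpow_mem hTΓ _) (hUΓ _)) (Γ.zpow_mem hTΓ _)
  · obtain ⟨ha, hd⟩ := hdiag (N + k) (by omega)
    obtain ⟨hb, hc⟩ := hoff (N + k) (by omega)
    exact norm_zpow_conj_apply_le h.val_T h.norm_mul_norm _ _ ha hb hc hd
  · obtain ⟨ha, hd⟩ := hdiag (N + k) (by omega)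
    obtain ⟨hb, hc⟩ := hoff (N + k) (by omega)
    obtain ⟨hp, hq, hr, hs⟩ := norm_inv_apply (h.dieudonneSq_eq_one (N + k))
      (h.diag_ne_zero (N + k)).1 (h.diag_ne_zero (N + k)).2
    have hW : (W k)⁻¹ = T ^ m (N + k) * (U (N + k))⁻¹ * T ^ (-m (N + k)) := by
      simp only [W, _root_.mul_inv_rev, _root_.zpow_neg, inv_inv, mul_assoc]
    rw [hW]
    exact norm_zpow_conj_apply_le h.val_T h.norm_mul_norm _ _ (hp ▸ hd) (hq ▸ hb) (hr ▸ hc)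
      (hs ▸ ha)
  · have := congrArg (fun A : M₂ˣ => normBC A) hij
    simpa only [W, normBC_zpow_conj h.val_T h.norm_mul_norm] using this

theorem normBC_eq_of_extremal (h : IsShimizuLeutbecher lam mu T U) {Γ : Subgroup M₂ˣ}
    [DiscreteTopology (Units.val '' (Γ : Set M₂ˣ))] (hTΓ : T ∈ Γ) (hUΓ : ∀ n, U n ∈ Γ)
    (hext : jorgensenConst lam mu * (1 + normBC (U 0)) = 1) (n : ℕ) :
    normBC (U n) = normBC (U 0) := by
  by_contra hne
  have hx := h.normBC_pos
  have hle := le_apply_zero_of_extremal (fun n => (hx n).le) h.normBC_succ_le hext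
  obtain ⟨hdec, hlim⟩ := strictAnti_tendsto_zero_of_extremal hx h.normBC_succ_le hext
    ((hle n).lt_of_ne hne)
  have hK : jorgensenConst lam mu < 1 := by nlinarith [hx 0]
  obtain ⟨D, hD⟩ := h.exists_norm_diag_le hle
  obtain ⟨n₀, m, R, hR⟩ := h.exists_balanced_tail hK hle hlim
  refine h.not_strictAnti_of_balanced hTΓ hUΓ (N := max n n₀) (m := m) (R := max D R)
    (fun k _ => ⟨(hD k).1.trans (le_max_left _ _), (hD k).2.trans (le_max_left _ _)⟩)
    (fun k hk => ⟨(hR k (by omega)).1.trans (le_max_right _ _),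
      (hR k (by omega)).2.trans (le_max_right _ _)⟩)
    (strictAnti_nat_of_succ_lt fun k => hdec _ ((le_max_left n n₀).trans (Nat.le_add_right _ k)))

end IsShimizuLeutbecher

theorem quaternion_jorgensen_extremal_propagation_general (a b c d lam mu : ℍ[ℝ])
    (S T : Matrix (Fin 2) (Fin 2) ℍ[ℝ])
    (hS : S = !![a, b; c, d]) (hT : T = !![lam, 0; 0, mu])
    (hαS : ‖a‖ ^ 2 * ‖d‖ ^ 2 + ‖b‖ ^ 2 * ‖c‖ ^ 2 - 2 * (a * star c * d * star b).re = 1)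
    (hdetT : ‖lam‖ * ‖mu‖ = 1)
    (US UT : (Matrix (Fin 2) (Fin 2) ℍ[ℝ])ˣ)
    (hUS : Units.val US = S) (hUT : Units.val UT = T)
    (hdisc : DiscreteTopology
      ↥(Units.val '' ((Subgroup.closure {US, UT} :
          Subgroup (Matrix (Fin 2) (Fin 2) ℍ[ℝ])ˣ) : Set (Matrix (Fin 2) (Fin 2) ℍ[ℝ])ˣ)))
    (U : ℕ → (Matrix (Fin 2) (Fin 2) ℍ[ℝ])ˣ)
    (hU0 : U 0 = US)
    (hUrec : ∀ n, U (n + 1) = U n * UT * (U n)⁻¹)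
    (aN bN cN dN : ℕ → ℍ[ℝ])
    (hUn : ∀ n, Units.val (U n) = !![aN n, bN n; cN n, dN n])
    (hbc : ∀ n, bN n * cN n ≠ 0)
    (K : ℝ)
    (hK : K = (lam.re - mu.re) ^ 2 + (‖lam.im‖ + ‖mu.im‖) ^ 2)
    (hext : K * (1 + ‖b * c‖) = 1) :
    ∀ n, K * (1 + ‖bN n * cN n‖) = 1 := by
  have hSL : IsShimizuLeutbecher lam mu UT U :=
    { val_T := hUT.trans hT
      norm_mul_norm := hdetT
      succ := hUrec
      dieudonneSq_zero := by rw [hU0, hUS, hS, dieudonneSq_of, hαS]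
      offDiag_ne_zero := fun n => by simpa [hUn] using hbc n }
  have hUTΓ : UT ∈ Subgroup.closure {US, UT} := Subgroup.subset_closure (by simp)
  have hUΓ := hSL.mem_of_mem hUTΓ (hU0 ▸ Subgroup.subset_closure (by simp))
  have hnormBC n : normBC (U n) = ‖bN n * cN n‖ := by simp [normBC, hUn]
  have hnormBC0 : normBC (U 0) = ‖b * c‖ := by simp [normBC, hU0, hUS, hS]
  intro n
  rw [← hnormBC, hSL.normBC_eq_of_extremal hUTΓ hUΓ (by rwa [hnormBC0, jorgensenConst, ← hK]) n,
    hnormBC0, hext]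

/-- extremality propagates along the Shimizu–Leutbecher sequence:
if `K(1 + |bc|) = 1` then `K(1 + |b_n c_n|) = 1` for all `n`. -/
theorem quaternion_jorgensen_extremal_propagation (a b c d lam mu : ℍ[ℝ])
    (S T : Matrix (Fin 2) (Fin 2) ℍ[ℝ])
    (hS : S = !![a, b; c, d]) (hT : T = !![lam, 0; 0, mu])
    (hαS : ‖a‖ ^ 2 * ‖d‖ ^ 2 + ‖b‖ ^ 2 * ‖c‖ ^ 2 - 2 * (a * star c * d * star b).re = 1)
    (hdetT : ‖lam‖ * ‖mu‖ = 1)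
    (hsim : ¬ ∃ q : ℍ[ℝ], q ≠ 0 ∧ mu = q * lam * q⁻¹)
    (US UT : (Matrix (Fin 2) (Fin 2) ℍ[ℝ])ˣ)
    (hUS : Units.val US = S) (hUT : Units.val UT = T)
    (hdisc : DiscreteTopology
      ↥(Units.val '' ((Subgroup.closure {US, UT} :
          Subgroup (Matrix (Fin 2) (Fin 2) ℍ[ℝ])ˣ) : Set (Matrix (Fin 2) (Fin 2) ℍ[ℝ])ˣ)))
    (U : ℕ → (Matrix (Fin 2) (Fin 2) ℍ[ℝ])ˣ)
    (hU0 : U 0 = US)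
    (hUrec : ∀ n, U (n + 1) = U n * UT * (U n)⁻¹)
    (aN bN cN dN : ℕ → ℍ[ℝ])
    (hUn : ∀ n, Units.val (U n) = !![aN n, bN n; cN n, dN n])
    (hbc : ∀ n, bN n * cN n ≠ 0)
    (K : ℝ)
    (hK : K = (lam.re - mu.re) ^ 2 + (‖lam.im‖ + ‖mu.im‖) ^ 2)
    (hext : K * (1 + ‖b * c‖) = 1) :
    ∀ n, K * (1 + ‖bN n * cN n‖) = 1 :=
  quaternion_jorgensen_extremal_propagation_general a b c d lam mu S T hS hT hαS hdetT US UT hUS hUT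
    hdisc U hU0 hUrec aN bN cN dN hUn hbc K hK hext
end

section
/- Let S = !![a,b;c,d] and T = !![λ,0;0,μ] be 2×2 quaternionic matrices with α_S = 1 and |λ| = |μ| = 1. Let α = arg λ, β = arg μ, and K := (Re λ − Re μ)² + (|Im λ| + |Im μ|)². If the extremal equality K·(1 + |b·c|) = 1 holds, then ||a·d| − 1| ≤ cot²((α + β)/2) − 3. -/
open Matrix Quaternion
open scoped Quaternion

/-!
Writing `λ = cos α + sin α · u` and `μ = cos β + sin β · v` with unit imaginary `u, v`, the quantity
`K` equals `2 - 2 cos (α + β) = 4 sin² ((α + β) / 2)`, so the extremal equality says exactly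
`cot² ((α + β) / 2) = 3 + 4 |bc|`. On the other hand, `|Re (a c̄ d b̄)| ≤ |ad| |bc|` turns `α_S = 1` into
`(|ad| - |bc|)² ≤ 1 ≤ (|ad| + |bc|)²`, i.e. `||ad| - 1| ≤ |bc|`.
-/

theorem Real.cot_sq_eq_inv_sin_sq_sub_one {x : ℝ} (hx : Real.sin x ≠ 0) :
    Real.cot x ^ 2 = (Real.sin x ^ 2)⁻¹ - 1 := by
  rw [Real.cot_eq_cos_div_sin, div_pow, Real.cos_sq']
  field_simp

theorem abs_sub_one_le_of_sq_add_sq_sub_two_mul_eq_one {x z r : ℝ} (hx : 0 ≤ x) (hz : 0 ≤ z)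
    (hr : |r| ≤ x * z) (h : x ^ 2 + z ^ 2 - 2 * r = 1) : |x - 1| ≤ z := by
  obtain ⟨hr₁, hr₂⟩ := abs_le.1 hr
  have hdiff : |x - z| ≤ 1 := (sq_le_one_iff_abs_le_one _).1 (by nlinarith)
  have hsum : 1 ≤ |x + z| := (one_le_sq_iff_one_le_abs _).1 (by nlinarith)
  rw [abs_of_nonneg (add_nonneg hx hz)] at hsum
  rw [abs_le]
  constructor <;> linarith [(abs_le.1 hdiff).2]

namespace Quaternion

theorem re_sq_add_norm_im_sq (q : ℍ[ℝ]) : q.re ^ 2 + ‖q.im‖ ^ 2 = ‖q‖ ^ 2 := by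
  simp only [sq, ← normSq_eq_norm_mul_self, normSq_def', re_im, imI_im, imJ_im, imK_im]
  ring

theorem abs_re_le_norm (q : ℍ[ℝ]) : |q.re| ≤ ‖q‖ :=
  abs_le_of_sq_le_sq (by nlinarith [re_sq_add_norm_im_sq q]) (norm_nonneg q)

noncomputable def arg (q : ℍ[ℝ]) : ℝ := Real.arccos (q.re / ‖q‖)

theorem cos_arg {q : ℍ[ℝ]} (hq : q ≠ 0) : Real.cos (arg q) = q.re / ‖q‖ := by
  have hq' : 0 < ‖q‖ := norm_pos_iff.2 hq
  obtain ⟨hre₁, hre₂⟩ := abs_le.1 (abs_re_le_norm q)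
  refine Real.cos_arccos ?_ ?_
  · rw [le_div_iff₀ hq']; linarith
  · rw [div_le_iff₀ hq']; linarith

theorem sin_arg {q : ℍ[ℝ]} (hq : q ≠ 0) : Real.sin (arg q) = ‖q.im‖ / ‖q‖ := by
  have hq' : 0 < ‖q‖ := norm_pos_iff.2 hq
  rw [arg, Real.sin_arccos, ← Real.sqrt_sq (by positivity : 0 ≤ ‖q.im‖ / ‖q‖)]
  congr 1
  field_simp
  linarith [re_sq_add_norm_im_sq q]

theorem sq_re_sub_add_sq_norm_im_add {p q : ℍ[ℝ]} (hp : ‖p‖ = 1) (hq : ‖q‖ = 1) :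
    (p.re - q.re) ^ 2 + (‖p.im‖ + ‖q.im‖) ^ 2 = 4 * Real.sin ((arg p + arg q) / 2) ^ 2 := by
  have hp0 : p ≠ 0 := norm_ne_zero_iff.1 (by rw [hp]; exact one_ne_zero)
  have hq0 : q ≠ 0 := norm_ne_zero_iff.1 (by rw [hq]; exact one_ne_zero)
  have hcos : Real.cos (arg p + arg q) = p.re * q.re - ‖p.im‖ * ‖q.im‖ := by
    rw [Real.cos_add, cos_arg hp0, cos_arg hq0, sin_arg hp0, sin_arg hq0, hp, hq]
    simp only [div_one]
  have hhalf : 4 * Real.sin ((arg p + arg q) / 2) ^ 2 = 2 - 2 * Real.cos (arg p + arg q) := by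
    rw [Real.sin_sq_eq_half_sub, mul_div_cancel₀ _ two_ne_zero]
    ring
  rw [hhalf, hcos]
  linear_combination re_sq_add_norm_im_sq p + re_sq_add_norm_im_sq q + (‖p‖ + 1) * hp + (‖q‖ + 1) * hq

theorem abs_norm_mul_sub_one_le_norm_mul {a b c d : ℍ[ℝ]}
    (h : ‖a‖ ^ 2 * ‖d‖ ^ 2 + ‖b‖ ^ 2 * ‖c‖ ^ 2 - 2 * (a * star c * d * star b).re = 1) :
    |‖a * d‖ - 1| ≤ ‖b * c‖ := by
  refine abs_sub_one_le_of_sq_add_sq_sub_two_mul_eq_one (norm_nonneg _) (norm_nonneg _)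
    ((abs_re_le_norm _).trans_eq ?_) (by rw [norm_mul, norm_mul]; linear_combination h)
  simp only [norm_mul, norm_star]
  ring

end Quaternion

theorem quaternion_extreme_ad_bound_general (a b c d lam mu : ℍ[ℝ])
    (hαS : ‖a‖ ^ 2 * ‖d‖ ^ 2 + ‖b‖ ^ 2 * ‖c‖ ^ 2 - 2 * (a * star c * d * star b).re = 1)
    (hlam : ‖lam‖ = 1) (hmu : ‖mu‖ = 1)
    (α β : ℝ)
    (hα : α = Real.arccos (lam.re / ‖lam‖))
    (hβ : β = Real.arccos (mu.re / ‖mu‖))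
    (hext : ((lam.re - mu.re) ^ 2 + (‖lam.im‖ + ‖mu.im‖) ^ 2) * (1 + ‖b * c‖) = 1) :
    |‖a * d‖ - 1| ≤ Real.cot ((α + β) / 2) ^ 2 - 3 := by
  have hK : (lam.re - mu.re) ^ 2 + (‖lam.im‖ + ‖mu.im‖) ^ 2 = 4 * Real.sin ((α + β) / 2) ^ 2 := by
    subst hα hβ
    exact Quaternion.sq_re_sub_add_sq_norm_im_add hlam hmu
  rw [hK] at hext
  have hsin : Real.sin ((α + β) / 2) ≠ 0 := by
    rintro h
    simp [h] at hext
  have hcot : Real.cot ((α + β) / 2) ^ 2 = 3 + 4 * ‖b * c‖ := by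
    rw [Real.cot_sq_eq_inv_sin_sq_sub_one hsin, inv_eq_of_mul_eq_one_left (a := 4 * (1 + ‖b * c‖))]
    · ring
    · linear_combination hext
  rw [hcot]
  linarith [Quaternion.abs_norm_mul_sub_one_le_norm_mul hαS, norm_nonneg (b * c)]

/-- computational consequence of the extremal equality:
`||ad| − 1| ≤ cot²((α+β)/2) − 3`. -/
theorem quaternion_extreme_ad_bound (a b c d lam mu : ℍ[ℝ])
    (S T : Matrix (Fin 2) (Fin 2) ℍ[ℝ])
    (hS : S = !![a, b; c, d]) (hT : T = !![lam, 0; 0, mu])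
    (hαS : ‖a‖ ^ 2 * ‖d‖ ^ 2 + ‖b‖ ^ 2 * ‖c‖ ^ 2 - 2 * (a * star c * d * star b).re = 1)
    (hlam : ‖lam‖ = 1) (hmu : ‖mu‖ = 1)
    (α β : ℝ)
    (hα : α = Real.arccos (lam.re / ‖lam‖))
    (hβ : β = Real.arccos (mu.re / ‖mu‖))
    (hext : ((lam.re - mu.re) ^ 2 + (‖lam.im‖ + ‖mu.im‖) ^ 2) * (1 + ‖b * c‖) = 1) :
    |‖a * d‖ - 1| ≤ Real.cot ((α + β) / 2) ^ 2 - 3 :=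
  quaternion_extreme_ad_bound_general a b c d lam mu hαS hlam hmu α β hα hβ hext
end

section
/- Let S = !![a,b;c,d] and T = !![λ,η;0,μ] be 2×2 quaternionic matrices with α_S = 1, Re λ = Re μ, |λ| ≤ 1 ≤ |μ|, |λ|·|μ| = 1 and c ≠ 0, and suppose S(λ,μ) := |μ|·(|Im λ| + |Im μ|) ≤ 1/(4√2). Set τ₀ := λ·(−c⁻¹·d) + η + (c⁻¹·d)·μ, t₀ := λ·(a·c⁻¹) + η − (a·c⁻¹)·μ, and κ₀ := (1 + √(1 − 4√2·S(λ,μ)))/2. If the extremal equality |c|·√(|τ₀|·|t₀|) = κ₀ holds, then |τ₀ − t₀| ≤ |conj(c)·d + a·conj(c)|·|τ₀|·|t₀| (equivalently, |τ₀ − t₀|/|τ₀·t₀| ≤ |conj(c)·d + a·conj(c)|). -/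
/-!
With `u := c⁻¹d + ac⁻¹` one has `c̄d + ac̄ = |c|²u`, and since `λ` and `μ` have the same real
part, which is central, `τ₀ − t₀ = u·Im μ − Im λ·u`. Hence `|τ₀ − t₀| ≤ |u|(|Im λ| + |Im μ|) ≤ |u|/4`
by the smallness of `S(λ,μ)`, while the extremal equality gives `|c|²|τ₀||t₀| = κ₀² ≥ 1/4`.
-/

open Quaternion

namespace Quaternion

section Field

variable {R : Type*} [Field R] [LinearOrder R] [IsStrictOrderedRing R]

theorem coe_normSq_mul_inv (c : ℍ[R]) : ((normSq c : R) : ℍ[R]) * c⁻¹ = star c := by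
  rcases eq_or_ne c 0 with rfl | hc
  · simp
  · rw [← star_mul_self, mul_assoc, mul_inv_cancel₀ hc, mul_one]

theorem inv_mul_coe_normSq (c : ℍ[R]) : c⁻¹ * ((normSq c : R) : ℍ[R]) = star c := by
  rw [← coe_commutes, coe_normSq_mul_inv]

theorem star_mul_add_mul_star (a c d : ℍ[R]) :
    star c * d + a * star c = ((normSq c : R) : ℍ[R]) * (c⁻¹ * d + a * c⁻¹) := by
  rw [mul_add, ← mul_assoc, coe_normSq_mul_inv, coe_commutes, mul_assoc, inv_mul_coe_normSq]

end Field

theorem norm_star_mul_add_mul_star (a c d : ℍ[ℝ]) :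
    ‖star c * d + a * star c‖ = ‖c‖ ^ 2 * ‖c⁻¹ * d + a * c⁻¹‖ := by
  rw [star_mul_add_mul_star, norm_mul, norm_coe, Real.norm_of_nonneg normSq_nonneg,
    normSq_eq_norm_mul_self, sq]

theorem mul_sub_mul_eq_of_re_eq {R : Type*} [CommRing R] {lam mu : ℍ[R]} (hre : lam.re = mu.re)
    (u : ℍ[R]) : u * mu - lam * u = u * mu.im - lam.im * u := by
  conv_lhs => rw [← re_add_im mu, ← re_add_im lam, hre]
  rw [mul_add, add_mul, coe_commutes]
  abel

end Quaternion

theorem norm_mul_sub_mul_le {A : Type*} [NonUnitalSeminormedRing A] (u p q : A) :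
    ‖u * q - p * u‖ ≤ ‖u‖ * (‖p‖ + ‖q‖) :=
  calc ‖u * q - p * u‖ ≤ ‖u * q‖ + ‖p * u‖ := norm_sub_le _ _
    _ ≤ ‖u‖ * ‖q‖ + ‖p‖ * ‖u‖ := add_le_add (norm_mul_le _ _) (norm_mul_le _ _)
    _ = ‖u‖ * (‖p‖ + ‖q‖) := by ring

theorem quarter_le_sq_one_add_sqrt_div_two (x : ℝ) : 1 / 4 ≤ ((1 + √x) / 2) ^ 2 := by
  nlinarith [Real.sqrt_nonneg x]

theorem quaternion_extreme_triangular_bound_general (a c d lam mu eta : ℍ[ℝ])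
    (hre : lam.re = mu.re)
    (hmu : 1 ≤ ‖mu‖)
    (hSmall : ‖mu‖ * (‖lam.im‖ + ‖mu.im‖) ≤ 1 / (4 * Real.sqrt 2))
    (τ₀ t₀ : ℍ[ℝ])
    (hτ₀ : τ₀ = lam * (-(c⁻¹ * d)) + eta + (c⁻¹ * d) * mu)
    (ht₀ : t₀ = lam * (a * c⁻¹) + eta - (a * c⁻¹) * mu)
    (κ₀ : ℝ)
    (hκ₀ : κ₀ = (1 + Real.sqrt (1 - 4 * Real.sqrt 2 * (‖mu‖ * (‖lam.im‖ + ‖mu.im‖)))) / 2)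
    (hext : ‖c‖ * Real.sqrt (‖τ₀‖ * ‖t₀‖) = κ₀) :
    ‖τ₀ - t₀‖ ≤ ‖star c * d + a * star c‖ * (‖τ₀‖ * ‖t₀‖) := by
  set u := c⁻¹ * d + a * c⁻¹ with hu
  have hdiff : ‖τ₀ - t₀‖ ≤ ‖u‖ * (‖lam.im‖ + ‖mu.im‖) := by
    have : τ₀ - t₀ = u * mu - lam * u := by rw [hτ₀, ht₀, hu]; noncomm_ring
    rw [this, mul_sub_mul_eq_of_re_eq hre]
    exact norm_mul_sub_mul_le u _ _
  have him : ‖lam.im‖ + ‖mu.im‖ ≤ 1 / 4 := by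
    have : 1 / (4 * Real.sqrt 2) ≤ 1 / 4 := by
      gcongr
      exact le_mul_of_one_le_right (by norm_num) Real.one_lt_sqrt_two.le
    linarith [le_mul_of_one_le_left (by positivity : 0 ≤ ‖lam.im‖ + ‖mu.im‖) hmu]
  have hκ : 1 / 4 ≤ ‖c‖ ^ 2 * (‖τ₀‖ * ‖t₀‖) := by
    rw [← Real.sq_sqrt (by positivity : 0 ≤ ‖τ₀‖ * ‖t₀‖), ← mul_pow, hext, hκ₀]
    exact quarter_le_sq_one_add_sqrt_div_two _
  calc ‖τ₀ - t₀‖ ≤ ‖u‖ * (1 / 4) := hdiff.trans (by gcongr)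
    _ ≤ ‖u‖ * (‖c‖ ^ 2 * (‖τ₀‖ * ‖t₀‖)) := by gcongr
    _ = ‖star c * d + a * star c‖ * (‖τ₀‖ * ‖t₀‖) := by
      rw [norm_star_mul_add_mul_star]; ring

/-- computational criterion for extremality in the triangular case:
if `|c|·√(|τ₀||t₀|) = κ₀` then `|τ₀ − t₀| ≤ |c̄d + ac̄|·|τ₀||t₀|`. -/
theorem quaternion_extreme_triangular_bound (a b c d lam mu eta : ℍ[ℝ])
    (S T : Matrix (Fin 2) (Fin 2) ℍ[ℝ])
    (hS : S = !![a, b; c, d]) (hT : T = !![lam, eta; 0, mu])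
    (hαS : ‖a‖ ^ 2 * ‖d‖ ^ 2 + ‖b‖ ^ 2 * ‖c‖ ^ 2 - 2 * (a * star c * d * star b).re = 1)
    (hre : lam.re = mu.re)
    (hlam : ‖lam‖ ≤ 1) (hmu : 1 ≤ ‖mu‖) (hdetT : ‖lam‖ * ‖mu‖ = 1)
    (hc : c ≠ 0)
    (hSmall : ‖mu‖ * (‖lam.im‖ + ‖mu.im‖) ≤ 1 / (4 * Real.sqrt 2))
    (τ₀ t₀ : ℍ[ℝ])
    (hτ₀ : τ₀ = lam * (-(c⁻¹ * d)) + eta + (c⁻¹ * d) * mu)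
    (ht₀ : t₀ = lam * (a * c⁻¹) + eta - (a * c⁻¹) * mu)
    (κ₀ : ℝ)
    (hκ₀ : κ₀ = (1 + Real.sqrt (1 - 4 * Real.sqrt 2 * (‖mu‖ * (‖lam.im‖ + ‖mu.im‖)))) / 2)
    (hext : ‖c‖ * Real.sqrt (‖τ₀‖ * ‖t₀‖) = κ₀) :
    ‖τ₀ - t₀‖ ≤ ‖star c * d + a * star c‖ * (‖τ₀‖ * ‖t₀‖) :=
  quaternion_extreme_triangular_bound_general a c d lam mu eta hre hmu hSmall τ₀ t₀ hτ₀ ht₀ κ₀ hκ₀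
    hext
end
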